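/- arXiv:math/0604418 — 5 statements merged into one kernel-verified Lean document; each statement's English description precedes it below -/
import Mathlib

section
/- Poisson product formula: if f = ∏_{α∈A}(x−α) and g = ∏_{β∈B}(x−β) are monic polynomials with |A| = m, |B| = n, then the resultant of f and g equals ∏_{α∈A} g(α). -/
open Polynomial Matrix

/-- The (m+n)×(m+n) Sylvester matrix of `f` (formal degree `m`) and `g` (formal degree `n`):
`n` shifted rows of the coefficients of `f` followed by `m` shifted rows of those of `g`. -/
noncomputable def sylvesterMat {R : Type*} [CommRing R] (m n : ℕ) (f g : Polynomial R) :
    Matrix (Fin (m + n)) (Fin (m + n)) R :=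
  Matrix.of fun i j =>
    if (i : ℕ) < n then
      (if (i : ℕ) ≤ (j : ℕ) ∧ (j : ℕ) ≤ m + (i : ℕ) then f.coeff (m + (i : ℕ) - (j : ℕ)) else 0)
    else
      (if (i : ℕ) - n ≤ (j : ℕ) ∧ (j : ℕ) ≤ n + ((i : ℕ) - n) then
        g.coeff (n + ((i : ℕ) - n) - (j : ℕ)) else 0)

namespace SylAux

variable {R : Type*} [CommRing R]

/-- Tail sum `∑_{t=r}^{d} α^(t-r) p_t`, reindexed. -/
noncomputable def T (p : Polynomial R) (d : ℕ) (α : R) (r : ℕ) : R :=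
  ∑ u ∈ Finset.range (d + 1 - r), α ^ u * p.coeff (r + u)

lemma T_eq_zero (p : Polynomial R) (d : ℕ) (α : R) (r : ℕ) (h : d < r) : T p d α r = 0 := by
  have h0 : d + 1 - r = 0 := by omega
  simp [T, h0]

lemma T_rec (p : Polynomial R) (d : ℕ) (α : R) (r : ℕ) (h : r ≤ d) :
    T p d α r = p.coeff r + α * T p d α (r + 1) := by
  have h1 : d + 1 - r = (d + 1 - (r + 1)) + 1 := by omega
  rw [T, h1, Finset.sum_range_succ', T, Finset.mul_sum, add_comm]
  congr 1
  · simp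
  · refine Finset.sum_congr rfl fun u _ => ?_
    rw [show r + (u + 1) = r + 1 + u by omega, pow_succ]
    ring

lemma T_self (g : Polynomial R) (n : ℕ) (α : R) : T g n α n = g.coeff n := by
  have h0 : n + 1 - n = 1 := by omega
  simp [T, h0]

lemma T_eval (p : Polynomial R) (d : ℕ) (α : R) (h : p.natDegree ≤ d) :
    T p d α 0 = Polynomial.eval α p := by
  rw [Polynomial.eval_eq_sum_range' (Nat.lt_succ_of_le h)]
  simp [T, mul_comm]

lemma natDegree_linear_mul_le (f : Polynomial R) (α : R) (m : ℕ) (hf : f.natDegree ≤ m) :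
    ((X - C α) * f).natDegree ≤ m + 1 := by
  refine le_trans (Polynomial.natDegree_mul_le) ?_
  have h := Polynomial.natDegree_X_sub_C_le α
  omega

lemma T_prod_zero (f : Polynomial R) (α : R) (m : ℕ) (hf : f.natDegree ≤ m) :
    T ((X - C α) * f) (m + 1) α 0 = 0 := by
  rw [T_eval _ _ _ (natDegree_linear_mul_le f α m hf)]
  simp

lemma coeff_linear_mul (f : Polynomial R) (α : R) (r : ℕ) :
    ((X - C α) * f).coeff (r + 1) = f.coeff r - α * f.coeff (r + 1) := by
  rw [sub_mul, Polynomial.coeff_sub, Polynomial.coeff_X_mul, Polynomial.coeff_C_mul]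

lemma T_prod_succ (f : Polynomial R) (α : R) (m : ℕ) (hf : f.natDegree ≤ m) (r : ℕ) :
    T ((X - C α) * f) (m + 1) α (r + 1) = f.coeff r := by
  have main : ∀ k r, m + 1 - r ≤ k → T ((X - C α) * f) (m + 1) α (r + 1) = f.coeff r := by
    intro k
    induction k with
    | zero =>
      intro r h
      rw [T_eq_zero _ _ _ _ (by omega), eq_comm]
      exact Polynomial.coeff_eq_zero_of_natDegree_lt (by omega)
    | succ k ih =>
      intro r h
      by_cases hr : m + 1 ≤ r
      · rw [T_eq_zero _ _ _ _ (by omega), eq_comm]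
        exact Polynomial.coeff_eq_zero_of_natDegree_lt (by omega)
      · rw [T_rec _ _ _ _ (by omega), coeff_linear_mul, ih (r + 1) (by omega)]
        ring
  exact main (m + 1 - r) r le_rfl

/-- Column operation matrix. -/
noncomputable def colOp (α : R) (N : ℕ) : Matrix (Fin N) (Fin N) R :=
  Matrix.of fun k j => if (k : ℕ) ≤ (j : ℕ) then α ^ ((j : ℕ) - (k : ℕ)) else 0

/-- Row operation matrix. -/
noncomputable def rowOp (α : R) (m n : ℕ) : Matrix (Fin (m + 1 + n)) (Fin (m + 1 + n)) R :=
  Matrix.of fun i i' =>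
    if i = i' then 1
    else if ((i' : ℕ) = (i : ℕ) + 1 ∧ n ≤ (i : ℕ) ∧ (i : ℕ) < m + n) then -α else 0

lemma det_colOp (α : R) (N : ℕ) : (colOp α N).det = 1 := by
  rw [Matrix.det_of_upperTriangular]
  · simp [colOp]
  · intro i j hij
    have : (j : ℕ) < (i : ℕ) := hij
    simp only [colOp, Matrix.of_apply]
    rw [if_neg (by omega)]

lemma det_rowOp (α : R) (m n : ℕ) : (rowOp α m n).det = 1 := by
  rw [Matrix.det_of_upperTriangular]
  · simp [rowOp]
  · intro i j hij
    have h1 : (j : ℕ) < (i : ℕ) := hij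
    simp only [rowOp, Matrix.of_apply]
    rw [if_neg (by intro h; exact absurd (congrArg Fin.val h) (by omega)),
      if_neg (by intro h; omega)]

lemma sum_Icc_eq {M : Type*} [AddCommMonoid M] (f : ℕ → M) (a b : ℕ) :
    ∑ k ∈ Finset.Icc a b, f k = ∑ u ∈ Finset.range (b + 1 - a), f (a + u) := by
  refine Finset.sum_nbij' (fun k => k - a) (fun u => a + u) ?_ ?_ ?_ ?_ ?_ <;>
    intros <;> simp_all [Finset.mem_Icc, Finset.mem_range] <;> omega

lemma rowSum (p : Polynomial R) (α : R) (d s j N : ℕ) (hds : d + s < N) :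
    (∑ k ∈ Finset.range N,
        (if s ≤ k ∧ k ≤ d + s then p.coeff (d + s - k) else 0) *
          (if k ≤ j then α ^ (j - k) else 0)) =
      if s ≤ j then α ^ (j - (d + s)) * T p d α (d + s - j) else 0 := by
  by_cases hsj : s ≤ j
  · rw [if_pos hsj]
    have h1 : ∀ k ∈ Finset.range N,
        (if s ≤ k ∧ k ≤ d + s then p.coeff (d + s - k) else 0) *
          (if k ≤ j then α ^ (j - k) else 0)
        = if k ∈ Finset.Icc s (min j (d + s)) then p.coeff (d + s - k) * α ^ (j - k) else 0 := by
      intro k _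
      by_cases h2 : s ≤ k ∧ k ≤ d + s
      · by_cases h3 : k ≤ j
        · rw [if_pos h2, if_pos h3, if_pos (by simp only [Finset.mem_Icc]; omega)]
        · rw [if_pos h2, if_neg h3, if_neg (by simp only [Finset.mem_Icc]; omega), mul_zero]
      · rw [if_neg h2, zero_mul, if_neg (by simp only [Finset.mem_Icc]; omega)]
    rw [Finset.sum_congr rfl h1, Finset.sum_ite_mem]
    rw [show Finset.range N ∩ Finset.Icc s (min j (d + s)) = Finset.Icc s (min j (d + s)) by
      ext k; simp only [Finset.mem_inter, Finset.mem_range, Finset.mem_Icc]; omega]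
    rw [sum_Icc_eq]
    rcases le_or_gt j (d + s) with hc | hc
    · rw [show j - (d + s) = 0 by omega, pow_zero, one_mul]
      simp only [T]
      conv_rhs => rw [← Finset.sum_range_reflect]
      rw [show min j (d + s) + 1 - s = d + 1 - (d + s - j) by omega]
      refine Finset.sum_congr rfl fun u hu => ?_
      simp only [Finset.mem_range] at hu
      rw [mul_comm]
      congr 1
      · congr 1; omega
      · congr 1; omega
    · rw [show d + s - j = 0 by omega]
      simp only [T]
      rw [Finset.mul_sum]
      conv_rhs => rw [← Finset.sum_range_reflect]
      rw [show min j (d + s) + 1 - s = d + 1 - 0 by omega]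
      refine Finset.sum_congr rfl fun u hu => ?_
      simp only [Finset.mem_range] at hu
      rw [← mul_assoc, ← pow_add, mul_comm]
      congr 1
      · congr 1; omega
      · congr 1; omega
  · rw [if_neg hsj]
    refine Finset.sum_eq_zero fun k _ => ?_
    by_cases h2 : k ≤ j
    · rw [if_neg (by omega), zero_mul]
    · rw [if_neg h2, mul_zero]

lemma syl_mul_colOp (m' n : ℕ) (p g : Polynomial R) (α : R) (i j : Fin (m' + n)) :
    (sylvesterMat m' n p g * colOp α (m' + n)) i j =
      if (i : ℕ) < n then
        (if (i : ℕ) ≤ (j : ℕ) then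
          α ^ ((j : ℕ) - (m' + (i : ℕ))) * T p m' α (m' + (i : ℕ) - (j : ℕ)) else 0)
      else
        (if (i : ℕ) - n ≤ (j : ℕ) then
          α ^ ((j : ℕ) - (n + ((i : ℕ) - n))) * T g n α (n + ((i : ℕ) - n) - (j : ℕ)) else 0) := by
  rw [Matrix.mul_apply]
  have hiN := i.isLt
  by_cases hi : (i : ℕ) < n
  · rw [if_pos hi]
    have hc : ∀ k : Fin (m' + n), sylvesterMat m' n p g i k * colOp α (m' + n) k j
        = (fun k : ℕ => (if (i : ℕ) ≤ k ∧ k ≤ m' + (i : ℕ) then p.coeff (m' + (i : ℕ) - k) else 0)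
            * (if k ≤ (j : ℕ) then α ^ ((j : ℕ) - k) else 0)) (k : ℕ) := by
      intro k
      simp only [sylvesterMat, colOp, Matrix.of_apply, if_pos hi]
    calc (∑ k : Fin (m' + n), sylvesterMat m' n p g i k * colOp α (m' + n) k j)
        = ∑ k ∈ Finset.range (m' + n),
            (fun k : ℕ => (if (i : ℕ) ≤ k ∧ k ≤ m' + (i : ℕ) then p.coeff (m' + (i : ℕ) - k) else 0)
              * (if k ≤ (j : ℕ) then α ^ ((j : ℕ) - k) else 0)) k := by
          rw [← Fin.sum_univ_eq_sum_range]
          exact Fintype.sum_congr _ _ hc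
      _ = _ := rowSum p α m' (i : ℕ) (j : ℕ) (m' + n) (by omega)
  · rw [if_neg hi]
    have hc : ∀ k : Fin (m' + n), sylvesterMat m' n p g i k * colOp α (m' + n) k j
        = (fun k : ℕ => (if (i : ℕ) - n ≤ k ∧ k ≤ n + ((i : ℕ) - n) then
              g.coeff (n + ((i : ℕ) - n) - k) else 0)
            * (if k ≤ (j : ℕ) then α ^ ((j : ℕ) - k) else 0)) (k : ℕ) := by
      intro k
      simp only [sylvesterMat, colOp, Matrix.of_apply, if_neg hi]
    calc (∑ k : Fin (m' + n), sylvesterMat m' n p g i k * colOp α (m' + n) k j)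
        = ∑ k ∈ Finset.range (m' + n),
            (fun k : ℕ => (if (i : ℕ) - n ≤ k ∧ k ≤ n + ((i : ℕ) - n) then
                g.coeff (n + ((i : ℕ) - n) - k) else 0)
              * (if k ≤ (j : ℕ) then α ^ ((j : ℕ) - k) else 0)) k := by
          rw [← Fin.sum_univ_eq_sum_range]
          exact Fintype.sum_congr _ _ hc
      _ = _ := rowSum g α n ((i : ℕ) - n) (j : ℕ) (m' + n) (by omega)

lemma rowOp_mul_apply_diag (α : R) (m n : ℕ) (M : Matrix (Fin (m + 1 + n)) (Fin (m + 1 + n)) R)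
    (i j : Fin (m + 1 + n)) (hcnd : ¬(n ≤ (i : ℕ) ∧ (i : ℕ) < m + n)) :
    (rowOp α m n * M) i j = M i j := by
  rw [Matrix.mul_apply]
  have hsplit : ∀ i' : Fin (m + 1 + n), rowOp α m n i i' * M i' j
      = if i = i' then M i' j else 0 := by
    intro i'
    simp only [rowOp, Matrix.of_apply]
    by_cases h1 : i = i'
    · rw [if_pos h1, if_pos h1, one_mul]
    · rw [if_neg h1, if_neg h1, if_neg (by tauto), zero_mul]
  rw [Finset.sum_congr rfl fun i' _ => hsplit i', Finset.sum_ite_eq]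
  simp

lemma rowOp_mul_apply (α : R) (m n : ℕ) (M : Matrix (Fin (m + 1 + n)) (Fin (m + 1 + n)) R)
    (i j : Fin (m + 1 + n)) (i' : Fin (m + 1 + n)) (hi' : (i' : ℕ) = (i : ℕ) + 1)
    (hcnd : n ≤ (i : ℕ) ∧ (i : ℕ) < m + n) :
    (rowOp α m n * M) i j = M i j + -α * M i' j := by
  rw [Matrix.mul_apply]
  have hsplit : ∀ a : Fin (m + 1 + n), rowOp α m n i a * M a j
      = (if i = a then M a j else 0) + (if i' = a then -α * M a j else 0) := by
    intro a
    simp only [rowOp, Matrix.of_apply]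
    by_cases h1 : i = a
    · rw [if_pos h1, if_pos h1, one_mul,
        if_neg (by intro hh; rw [← hh] at h1; rw [h1] at hi'; omega), add_zero]
    · rw [if_neg h1, if_neg h1, zero_add]
      by_cases h2 : i' = a
      · rw [if_pos h2, if_pos ⟨by rw [← h2, hi'], hcnd⟩]
      · rw [if_neg h2, if_neg (by rintro ⟨ha, -⟩; exact h2 (Fin.ext (by omega)))]
        rw [zero_mul]
  rw [Finset.sum_congr rfl fun a _ => hsplit a, Finset.sum_add_distrib,
    Finset.sum_ite_eq, Finset.sum_ite_eq]
  simp

/-- The matrix obtained after the row and column operations. -/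
noncomputable def target (α : R) (m n : ℕ) (f g : Polynomial R) :
    Matrix (Fin (m + 1 + n)) (Fin (m + 1 + n)) R :=
  Matrix.of fun i j =>
    if (i : ℕ) < n then
      (if (i : ℕ) ≤ (j : ℕ) ∧ (j : ℕ) ≤ m + (i : ℕ) then f.coeff (m + (i : ℕ) - (j : ℕ)) else 0)
    else if (i : ℕ) < m + n then
      (if (i : ℕ) - n ≤ (j : ℕ) ∧ (j : ℕ) ≤ n + ((i : ℕ) - n) then
        g.coeff (n + ((i : ℕ) - n) - (j : ℕ)) else 0)
    else (if m ≤ (j : ℕ) then T g n α (n + m - (j : ℕ)) else 0)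

lemma rowOp_syl_colOp (α : R) (m n : ℕ) (f g : Polynomial R)
    (hf : f.natDegree ≤ m) (hg : g.natDegree ≤ n) :
    rowOp α m n * (sylvesterMat (m + 1) n ((X - C α) * f) g * colOp α (m + 1 + n))
      = target α m n f g := by
  ext i j
  have hiN := i.isLt
  have hjN := j.isLt
  rw [target, Matrix.of_apply]
  by_cases hi : (i : ℕ) < n
  · rw [rowOp_mul_apply_diag α m n _ i j (by omega), syl_mul_colOp, if_pos hi, if_pos hi]
    by_cases hij : (i : ℕ) ≤ (j : ℕ)
    · rw [if_pos hij]
      by_cases hj2 : (j : ℕ) ≤ m + (i : ℕ)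
      · rw [if_pos ⟨hij, hj2⟩, show (j : ℕ) - (m + 1 + (i : ℕ)) = 0 by omega, pow_zero, one_mul,
          show m + 1 + (i : ℕ) - (j : ℕ) = (m + (i : ℕ) - (j : ℕ)) + 1 by omega,
          T_prod_succ f α m hf]
      · rw [if_neg (by tauto), show m + 1 + (i : ℕ) - (j : ℕ) = 0 by omega,
          T_prod_zero f α m hf, mul_zero]
    · rw [if_neg hij, if_neg (by tauto)]
  · rw [if_neg hi]
    by_cases hi2 : (i : ℕ) < m + n
    · obtain ⟨i', hi'⟩ : ∃ i' : Fin (m + 1 + n), (i' : ℕ) = (i : ℕ) + 1 :=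
        ⟨⟨(i : ℕ) + 1, by omega⟩, rfl⟩
      have hA : (sylvesterMat (m + 1) n ((X - C α) * f) g * colOp α (m + 1 + n)) i j
          = (if (i : ℕ) - n ≤ (j : ℕ) then
              α ^ ((j : ℕ) - (n + ((i : ℕ) - n))) * T g n α (n + ((i : ℕ) - n) - (j : ℕ))
            else 0) := by
        rw [syl_mul_colOp, if_neg hi]
      have hB : (sylvesterMat (m + 1) n ((X - C α) * f) g * colOp α (m + 1 + n)) i' j
          = (if ((i : ℕ) - n) + 1 ≤ (j : ℕ) then
              α ^ ((j : ℕ) - (n + (((i : ℕ) - n) + 1)))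
                * T g n α (n + (((i : ℕ) - n) + 1) - (j : ℕ))
            else 0) := by
        rw [syl_mul_colOp, hi', if_neg (by omega : ¬((i : ℕ) + 1 < n)),
          show (i : ℕ) + 1 - n = ((i : ℕ) - n) + 1 by omega]
      rw [rowOp_mul_apply α m n _ i j i' hi' ⟨by omega, hi2⟩, hA, hB, if_pos hi2]
      by_cases h1 : (i : ℕ) - n ≤ (j : ℕ)
      · by_cases h2 : (j : ℕ) ≤ n + ((i : ℕ) - n)
        · rw [if_pos (show (i : ℕ) - n ≤ (j : ℕ) ∧ (j : ℕ) ≤ n + ((i : ℕ) - n) from ⟨h1, h2⟩),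
            if_pos h1, show (j : ℕ) - (n + ((i : ℕ) - n)) = 0 by omega, pow_zero, one_mul]
          by_cases h3 : (i : ℕ) - n + 1 ≤ (j : ℕ)
          · rw [if_pos h3, show (j : ℕ) - (n + ((i : ℕ) - n + 1)) = 0 by omega, pow_zero, one_mul,
              show n + ((i : ℕ) - n + 1) - (j : ℕ) = (n + ((i : ℕ) - n) - (j : ℕ)) + 1 by omega,
              T_rec g n α (n + ((i : ℕ) - n) - (j : ℕ)) (by omega)]
            ring
          · rw [if_neg h3, mul_zero, add_zero,
              show n + ((i : ℕ) - n) - (j : ℕ) = n by omega, T_self]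
        · rw [if_neg (show ¬((i : ℕ) - n ≤ (j : ℕ) ∧ (j : ℕ) ≤ n + ((i : ℕ) - n)) by tauto),
            if_pos h1, if_pos (show (i : ℕ) - n + 1 ≤ (j : ℕ) by omega),
            show n + ((i : ℕ) - n) - (j : ℕ) = 0 by omega,
            show n + ((i : ℕ) - n + 1) - (j : ℕ) = 0 by omega,
            show (j : ℕ) - (n + ((i : ℕ) - n + 1)) = (j : ℕ) - (n + ((i : ℕ) - n) + 1) by omega,
            show (j : ℕ) - (n + ((i : ℕ) - n)) = ((j : ℕ) - (n + ((i : ℕ) - n) + 1)) + 1 by omega,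
            pow_succ]
          ring
      · rw [if_neg (show ¬((i : ℕ) - n ≤ (j : ℕ) ∧ (j : ℕ) ≤ n + ((i : ℕ) - n)) by tauto),
          if_neg h1, if_neg (show ¬((i : ℕ) - n + 1 ≤ (j : ℕ)) by omega), mul_zero, add_zero]
    · rw [rowOp_mul_apply_diag α m n _ i j (by omega), syl_mul_colOp, if_neg hi, if_neg hi2]
      have hi4 : (i : ℕ) = m + n := by omega
      rw [hi4, show m + n - n = m by omega, show (j : ℕ) - (n + m) = 0 by omega, pow_zero]
      by_cases h1 : m ≤ (j : ℕ)
      · rw [if_pos h1, if_pos h1, one_mul]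
      · rw [if_neg h1, if_neg h1]

lemma det_target (α : R) (m n : ℕ) (f g : Polynomial R) (hg : g.natDegree ≤ n) :
    (target α m n f g).det = Polynomial.eval α g * (sylvesterMat m n f g).det := by
  have hmn : m + n + 1 = m + 1 + n := by omega
  let e : Fin (m + n) ⊕ Fin 1 ≃ Fin (m + 1 + n) := finSumFinEquiv.trans (finCongr hmn)
  have he1 : ∀ i : Fin (m + n), ((e (Sum.inl i)) : ℕ) = (i : ℕ) := by
    intro i; simp [e]
  have he2 : ∀ x : Fin 1, ((e (Sum.inr x)) : ℕ) = m + n := by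
    intro x; simp [e, Fin.ext_iff]
  rw [← Matrix.det_submatrix_equiv_self e (target α m n f g)]
  have hsub : (target α m n f g).submatrix e e
      = Matrix.fromBlocks (sylvesterMat m n f g) 0
          (Matrix.of fun (_ : Fin 1) (j : Fin (m + n)) =>
            if m ≤ (j : ℕ) then T g n α (n + m - (j : ℕ)) else 0)
          (Matrix.of fun (_ : Fin 1) (_ : Fin 1) => Polynomial.eval α g) := by
    ext i j
    rcases i with i | i <;> rcases j with j | j <;>
      simp only [Matrix.submatrix_apply, Matrix.fromBlocks, Matrix.of_apply, Sum.elim_inl,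
        Sum.elim_inr, target, Matrix.zero_apply, he1, he2, sylvesterMat]
    · have hi := i.isLt
      by_cases h : (i : ℕ) < n
      · rw [if_pos h, if_pos h]
      · rw [if_neg h, if_neg h, if_pos hi]
    · have hi := i.isLt
      by_cases h : (i : ℕ) < n
      · rw [if_pos h, if_neg (by omega)]
      · rw [if_neg h, if_pos hi, if_neg (by omega)]
    · rw [if_neg (by omega), if_neg (by omega)]
    · rw [if_neg (by omega), if_neg (by omega), if_pos (by omega),
        show n + m - (m + n) = 0 by omega, T_eval g n α hg]
  rw [hsub, Matrix.det_fromBlocks_zero₁₂, Matrix.det_fin_one, Matrix.of_apply, mul_comm]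

lemma key (α : R) (m n : ℕ) (f g : Polynomial R) (hf : f.natDegree ≤ m) (hg : g.natDegree ≤ n) :
    (sylvesterMat (m + 1) n ((X - C α) * f) g).det
      = Polynomial.eval α g * (sylvesterMat m n f g).det := by
  have h1 := rowOp_syl_colOp α m n f g hf hg
  have h2 : (rowOp α m n *
      (sylvesterMat (m + 1) n ((X - C α) * f) g * colOp α (m + 1 + n))).det
      = (sylvesterMat (m + 1) n ((X - C α) * f) g).det := by
    rw [Matrix.det_mul, Matrix.det_mul, det_rowOp, det_colOp, one_mul, mul_one]
  rw [← h2, h1, det_target α m n f g hg]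

lemma stmt3_aux [Nontrivial R] (n : ℕ) (g : Polynomial R) (hg : g.natDegree ≤ n) :
    ∀ m (A : Fin m → R),
      (sylvesterMat m n (∏ i, (X - C (A i))) g).det = ∏ i, Polynomial.eval (A i) g := by
  intro m
  induction m with
  | zero =>
    intro A
    rw [show (∏ i, (X - C (A i)) : Polynomial R) = 1 by simp]
    rw [show (sylvesterMat 0 n (1 : Polynomial R) g) = 1 from ?_]
    · simp [Matrix.det_one]
    · ext i j
      have hi := i.isLt
      simp only [sylvesterMat, Matrix.of_apply, Matrix.one_apply]
      rw [if_pos (by omega)]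
      by_cases h : i = j
      · subst h
        rw [if_pos ⟨le_refl _, by omega⟩, show 0 + (i : ℕ) - (i : ℕ) = 0 by omega, if_pos rfl]
        simp
      · rw [if_neg (fun hh => h (Fin.ext (by omega))), if_neg h]
  | succ m ih =>
    intro A
    have hf : (∏ i : Fin m, (X - C (A i.succ)) : Polynomial R).natDegree ≤ m := by
      refine le_trans (Polynomial.natDegree_prod_le _ _) ?_
      simp
    rw [Fin.prod_univ_succ fun i => (X - C (A i) : Polynomial R), key (A 0) m n _ g hf hg,
      ih fun i => A i.succ, Fin.prod_univ_succ fun i => Polynomial.eval (A i) g]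

end SylAux

/-- Poisson product formula: for monic `f = ∏ (x − α)` and `g = ∏ (x − β)`,
`Res(f,g) = ∏_{α ∈ A} g(α)`. -/
theorem stmt3 {R : Type*} [CommRing R] [IsDomain R] (m n : ℕ) (A : Fin m → R) (B : Fin n → R) :
    (sylvesterMat m n (∏ i, (X - C (A i))) (∏ j, (X - C (B j)))).det =
      ∏ i, Polynomial.eval (A i) (∏ j, (X - C (B j))) := by
  have hg : (∏ j, (X - C (B j)) : Polynomial R).natDegree ≤ n := by
    refine le_trans (Polynomial.natDegree_prod_le _ _) ?_
    simp
  exact SylAux.stmt3_aux n _ hg m A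
end

section
/- Let S_d be the (m+n−d)×(m+n−d) matrix whose first d rows form the band matrix M_{t−x} with rows (0,…,0,−x,1,0,…,0) (the −x in position i for row i), whose next n−d rows are the shifted coefficient rows (a₀,…,a_m) of f, and whose last m−d rows are the shifted coefficient rows (b₀,…,b_n) of g. Then Sres_d(f,g) = (−1)^{d+(n−d)(m−d)} det(S_d). -/
open Polynomial Matrix Equiv

section AuxLemmas

variable {F : Type*} [CommRing F]

private lemma aux_band (K i : ℕ) (h : i + 1 < K) :
    (∑ k : Fin K, (if (k : ℕ) = i then (-X : F[X]) else if (k : ℕ) = i + 1 then 1 else 0)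
      * X ^ (k : ℕ)) = 0 := by
  have hfun : ∀ k : Fin K,
      (if (k : ℕ) = i then (-X : F[X]) else if (k : ℕ) = i + 1 then 1 else 0) * X ^ (k : ℕ)
        = (if k = (⟨i, by omega⟩ : Fin K) then -(X ^ (i + 1)) else 0)
          + (if k = (⟨i + 1, h⟩ : Fin K) then X ^ (i + 1) else 0) := by
    intro k
    by_cases h1 : (k : ℕ) = i
    · have hk : k = (⟨i, by omega⟩ : Fin K) := Fin.ext h1
      have hk2 : k ≠ (⟨i + 1, h⟩ : Fin K) := by
        simp only [ne_eq, Fin.ext_iff]; omega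
      rw [if_pos h1, if_pos hk, if_neg hk2, add_zero, h1, pow_succ]
      ring
    · by_cases h2 : (k : ℕ) = i + 1
      · have hk : k = (⟨i + 1, h⟩ : Fin K) := Fin.ext h2
        have hk1 : k ≠ (⟨i, by omega⟩ : Fin K) := by
          simp only [ne_eq, Fin.ext_iff]; omega
        rw [if_neg h1, if_pos h2, if_neg hk1, if_pos hk, zero_add, h2, one_mul]
      · have hk1 : k ≠ (⟨i, by omega⟩ : Fin K) := by
          simp only [ne_eq, Fin.ext_iff]; omega
        have hk2 : k ≠ (⟨i + 1, h⟩ : Fin K) := by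
          simp only [ne_eq, Fin.ext_iff]; omega
        rw [if_neg h1, if_neg h2, if_neg hk1, if_neg hk2, zero_mul, add_zero]
  rw [Finset.sum_congr rfl (fun k _ => hfun k), Finset.sum_add_distrib]
  simp

private lemma aux_row (K mm i' : ℕ) (f : F[X]) (hf : f.natDegree < mm + 1) (h : i' + mm < K) :
    (∑ k : Fin K, (if i' ≤ (k : ℕ) ∧ (k : ℕ) ≤ i' + mm then C (f.coeff ((k : ℕ) - i')) else 0)
      * X ^ (k : ℕ)) = X ^ i' * f := by
  rw [Fin.sum_univ_eq_sum_range
    (fun k => (if i' ≤ k ∧ k ≤ i' + mm then C (f.coeff (k - i')) else 0) * X ^ k) K]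
  have h1 : ∀ k ∈ Finset.range K,
      (if i' ≤ k ∧ k ≤ i' + mm then C (f.coeff (k - i')) else 0) * X ^ k
        = if k ∈ Finset.Icc i' (i' + mm) then C (f.coeff (k - i')) * X ^ k else 0 := by
    intro k _
    by_cases hk : i' ≤ k ∧ k ≤ i' + mm
    · rw [if_pos hk, if_pos (Finset.mem_Icc.mpr hk)]
    · rw [if_neg hk, if_neg (fun hc => hk (Finset.mem_Icc.mp hc)), zero_mul]
  rw [Finset.sum_congr rfl h1, Finset.sum_ite_mem]
  have h2 : Finset.range K ∩ Finset.Icc i' (i' + mm) = Finset.Icc i' (i' + mm) := by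
    apply Finset.inter_eq_right.mpr
    intro k hk
    simp only [Finset.mem_Icc] at hk
    exact Finset.mem_range.mpr (by omega)
  rw [h2, ← Finset.Ico_add_one_right_eq_Icc, Finset.sum_Ico_eq_sum_range]
  have h3 : i' + mm + 1 - i' = mm + 1 := by omega
  rw [h3]
  have h4 : ∀ t ∈ Finset.range (mm + 1),
      C (f.coeff (i' + t - i')) * X ^ (i' + t) = X ^ i' * (C (f.coeff t) * X ^ t) := by
    intro t _
    rw [Nat.add_sub_cancel_left, pow_add]
    ring
  rw [Finset.sum_congr rfl h4, ← Finset.mul_sum]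
  congr 1
  conv_rhs => rw [Polynomial.as_sum_range' f (mm + 1) hf]
  exact Finset.sum_congr rfl fun t _ => Polynomial.C_mul_X_pow_eq_monomial

private lemma rot_pow_val {n : ℕ} (k : ℕ) (x : Fin n) :
    ((((finRotate n) ^ k) x : Fin n) : ℕ) = ((x : ℕ) + k) % n := by
  rcases n with _ | t
  · exact x.elim0
  · induction k with
    | zero => simp [Nat.mod_eq_of_lt x.isLt]
    | succ k ih =>
      rw [pow_succ', Equiv.Perm.mul_apply, finRotate_succ_apply, Fin.val_add_one]
      by_cases hl : ((finRotate (t + 1)) ^ k) x = Fin.last t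
      · rw [if_pos hl]
        have hv : ((((finRotate (t + 1)) ^ k) x : Fin (t + 1)) : ℕ) = t := by
          rw [hl]; rfl
        rw [hv] at ih
        rw [show (x : ℕ) + (k + 1) = ((x : ℕ) + k) + 1 by omega, Nat.add_mod, ← ih]
        simp [Nat.mod_self]
      · rw [if_neg hl]
        have hv : ((((finRotate (t + 1)) ^ k) x : Fin (t + 1)) : ℕ) < t := by
          have h1 := (((finRotate (t + 1)) ^ k) x).isLt
          have h2 : ((((finRotate (t + 1)) ^ k) x : Fin (t + 1)) : ℕ) ≠ t := by
            intro hc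
            exact hl (Fin.ext hc)
          omega
        rw [ih] at hv ⊢
        rw [show (x : ℕ) + (k + 1) = ((x : ℕ) + k) + 1 by omega, Nat.add_mod ((x:ℕ)+k) 1]
        rw [Nat.mod_eq_of_lt (show 1 < t + 1 by omega)]
        rw [Nat.mod_eq_of_lt (show ((x:ℕ)+k) % (t+1) + 1 < t + 1 by omega)]

private lemma sign_rot {n : ℕ} (h : 1 ≤ n) :
    Equiv.Perm.sign (finRotate n) = (-1 : ℤˣ) ^ (n - 1) := by
  rcases n with _ | t
  · omega
  · rw [sign_finRotate]

private lemma negOne_pow_aux {M : Type*} [Monoid M] [HasDistribNeg M] (p q : ℕ) :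
    ((-1 : M)) ^ ((p + q - 1) * q) = (-1 : M) ^ (p * q) := by
  rcases q with _ | q
  · simp
  · rw [show p + (q + 1) - 1 = p + q by omega, add_mul, pow_add,
      Even.neg_one_pow (Nat.even_mul_succ_self q), mul_one]

end AuxLemmas

/-- The `d`-th determinantal subresultant of `f` (formal degree `m`) and `g` (formal degree `n`):
the determinant of the (m+n−2d)×(m+n−2d) matrix whose first `n−d` rows are the shifted
coefficient rows of `f`, whose last `m−d` rows are the shifted coefficient rows of `g`, and
whose last column consists of `x^{n−d−1}f, …, f, x^{m−d−1}g, …, g`. -/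
noncomputable def sres {F : Type*} [CommRing F] (m n d : ℕ) (f g : Polynomial F) :
    Polynomial F :=
  Matrix.det (Matrix.of fun i j : Fin (m + n - 2 * d) =>
    if (j : ℕ) = m + n - 2 * d - 1 then
      (if (i : ℕ) < n - d then X ^ (n - d - 1 - (i : ℕ)) * f
       else X ^ (m - d - 1 - ((i : ℕ) - (n - d))) * g)
    else
      if (i : ℕ) < n - d then
        (if (i : ℕ) ≤ (j : ℕ) ∧ (j : ℕ) ≤ m + (i : ℕ) then
          C (f.coeff (m + (i : ℕ) - (j : ℕ))) else 0)
      else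
        (if (i : ℕ) - (n - d) ≤ (j : ℕ) ∧ (j : ℕ) ≤ n + ((i : ℕ) - (n - d)) then
          C (g.coeff (n + ((i : ℕ) - (n - d)) - (j : ℕ))) else 0))

/-- Sres_d(f,g) = (−1)^{d+(n−d)(m−d)} · det S_d, where S_d is the
(m+n−d)×(m+n−d) matrix whose first d rows form the band matrix M_{t−x}
(with −x in position i and 1 in position i+1 of row i), whose next n−d rows
are the shifted coefficient rows (a₀,…,a_m) of f, and whose last m−d rows are
the shifted coefficient rows (b₀,…,b_n) of g. -/
theorem stmt8 {F : Type*} [CommRing F] (m n d : ℕ) (f g : Polynomial F)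
    (hf : f.degree ≤ m) (hg : g.degree ≤ n)
    (hd : d < min m n ∨ (m ≠ n ∧ d = min m n)) :
    sres m n d f g =
      (-1 : Polynomial F) ^ (d + (n - d) * (m - d)) *
        Matrix.det (Matrix.of fun i j : Fin (m + n - d) =>
          if (i : ℕ) < d then
            (if (j : ℕ) = (i : ℕ) then -X else if (j : ℕ) = (i : ℕ) + 1 then 1 else 0)
          else if (i : ℕ) < d + (n - d) then
            (if (i : ℕ) - d ≤ (j : ℕ) ∧ (j : ℕ) ≤ ((i : ℕ) - d) + m then
              C (f.coeff ((j : ℕ) - ((i : ℕ) - d))) else 0)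
          else
            (if (i : ℕ) - (d + (n - d)) ≤ (j : ℕ) ∧ (j : ℕ) ≤ ((i : ℕ) - (d + (n - d))) + n then
              C (g.coeff ((j : ℕ) - ((i : ℕ) - (d + (n - d))))) else 0)) := by
  classical
  have hdm : d ≤ m := by rcases hd with h | ⟨h1, h2⟩ <;> omega
  have hdn : d ≤ n := by rcases hd with h | ⟨h1, h2⟩ <;> omega
  have hN1 : 1 ≤ m + n - 2 * d := by rcases hd with h | ⟨h1, h2⟩ <;> omega
  set A : Matrix (Fin (m + n - d)) (Fin (m + n - d)) F[X] :=
    Matrix.of fun i j : Fin (m + n - d) =>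
      if (i : ℕ) < d then
        (if (j : ℕ) = (i : ℕ) then -X else if (j : ℕ) = (i : ℕ) + 1 then 1 else 0)
      else if (i : ℕ) < d + (n - d) then
        (if (i : ℕ) - d ≤ (j : ℕ) ∧ (j : ℕ) ≤ ((i : ℕ) - d) + m then
          C (f.coeff ((j : ℕ) - ((i : ℕ) - d))) else 0)
      else
        (if (i : ℕ) - (d + (n - d)) ≤ (j : ℕ) ∧ (j : ℕ) ≤ ((i : ℕ) - (d + (n - d))) + n then
          C (g.coeff ((j : ℕ) - ((i : ℕ) - (d + (n - d))))) else 0) with hA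
  set T : Matrix (Fin (m + n - d)) (Fin (m + n - d)) F[X] :=
    Matrix.of fun i j : Fin (m + n - d) =>
      if (j : ℕ) = 0 then (X : F[X]) ^ (i : ℕ) else if i = j then 1 else 0 with hT
  have hTtri : T.BlockTriangular OrderDual.toDual := by
    intro i j hij
    have hij' : (i : ℕ) < (j : ℕ) := hij
    rw [hT]
    simp only [Matrix.of_apply]
    rw [if_neg (by omega), if_neg (by intro hc; rw [hc] at hij'; omega)]
  have hdetT : T.det = 1 := by
    rw [Matrix.det_of_lowerTriangular T hTtri]
    apply Finset.prod_eq_one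
    intro k _
    rw [hT]
    by_cases hk : (k : ℕ) = 0
    · simp [hk]
    · simp [hk]
  set e : Fin d ⊕ Fin (m + n - 2 * d) ≃ Fin (m + n - d) :=
    finSumFinEquiv.trans (finCongr (by omega)) with he
  set e2 : Fin (n - d) ⊕ Fin (m - d) ≃ Fin (m + n - 2 * d) :=
    finSumFinEquiv.trans (finCongr (by omega)) with he2
  set e3 : Fin (d + 1) ⊕ Fin (m + n - d - (d + 1)) ≃ Fin (m + n - d) :=
    finSumFinEquiv.trans (finCongr (by omega)) with he3
  set π : Equiv.Perm (Fin (m + n - 2 * d)) :=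
    e2.permCongr (Equiv.sumCongr Fin.revPerm Fin.revPerm) with hπ
  set c : Equiv.Perm (Fin (m + n - d)) :=
    e3.permCongr (Equiv.sumCongr (finRotate (d + 1)) (Equiv.refl _)) with hc
  set ρ : Fin d ⊕ Fin (m + n - 2 * d) ≃ Fin (m + n - d) :=
    (Equiv.sumCongr (Equiv.refl (Fin d)) π).trans e with hρ
  set κ : Fin d ⊕ Fin (m + n - 2 * d) ≃ Fin (m + n - d) :=
    (Equiv.sumCongr (Equiv.refl (Fin d)) Fin.revPerm).trans (e.trans c) with hκ
  set σ : Equiv.Perm (Fin (m + n - d)) := ρ.symm.trans κ with hσ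
  have heL : ∀ i : Fin d, ((e (Sum.inl i)) : ℕ) = (i : ℕ) := by
    intro i; rw [he]; simp
  have heR : ∀ r : Fin (m + n - 2 * d), ((e (Sum.inr r)) : ℕ) = d + (r : ℕ) := by
    intro r; rw [he]; simp
  have he2L : ∀ a : Fin (n - d), ((e2 (Sum.inl a)) : ℕ) = (a : ℕ) := by
    intro a; rw [he2]; simp
  have he2R : ∀ b : Fin (m - d), ((e2 (Sum.inr b)) : ℕ) = (n - d) + (b : ℕ) := by
    intro b; rw [he2]; simp
  have he3L : ∀ z : Fin (d + 1), ((e3 (Sum.inl z)) : ℕ) = (z : ℕ) := by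
    intro z; rw [he3]; simp
  have he3R : ∀ z : Fin (m + n - d - (d + 1)), ((e3 (Sum.inr z)) : ℕ) = (d + 1) + (z : ℕ) := by
    intro z; rw [he3]; simp
  have hπL : ∀ a : Fin (n - d), π (e2 (Sum.inl a)) = e2 (Sum.inl a.rev) := by
    intro a; rw [hπ]
    simp [Equiv.permCongr_apply, Equiv.symm_apply_apply]
  have hπR : ∀ b : Fin (m - d), π (e2 (Sum.inr b)) = e2 (Sum.inr b.rev) := by
    intro b; rw [hπ]
    simp [Equiv.permCongr_apply, Equiv.symm_apply_apply]
  have hcLow : ∀ x : Fin (m + n - d), (x : ℕ) < d → ((c x) : ℕ) = (x : ℕ) + 1 := by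
    intro x hx
    have hs : e3.symm x = Sum.inl ⟨(x : ℕ), by omega⟩ := by
      rw [Equiv.symm_apply_eq]
      apply Fin.ext
      rw [he3L]
    rw [hc, Equiv.permCongr_apply, hs]
    simp only [Equiv.sumCongr_apply, Sum.map_inl]
    rw [finRotate_succ_apply, he3L, Fin.val_add_one,
      if_neg (by simp only [ne_eq, Fin.ext_iff, Fin.val_last]; omega)]
  have hcEq : ∀ x : Fin (m + n - d), (x : ℕ) = d → ((c x) : ℕ) = 0 := by
    intro x hx
    have hs : e3.symm x = Sum.inl (Fin.last d) := by
      rw [Equiv.symm_apply_eq]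
      apply Fin.ext
      rw [he3L, Fin.val_last, hx]
    rw [hc, Equiv.permCongr_apply, hs]
    simp only [Equiv.sumCongr_apply, Sum.map_inl]
    rw [finRotate_last, he3L]
    rfl
  have hcGt : ∀ x : Fin (m + n - d), d < (x : ℕ) → ((c x) : ℕ) = (x : ℕ) := by
    intro x hx
    have hs : e3.symm x = Sum.inr ⟨(x : ℕ) - (d + 1), by omega⟩ := by
      rw [Equiv.symm_apply_eq]
      apply Fin.ext
      rw [he3R]
      show (x : ℕ) = (d + 1) + ((x : ℕ) - (d + 1))
      omega
    rw [hc, Equiv.permCongr_apply, hs]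
    simp only [Equiv.sumCongr_apply, Sum.map_inr, Equiv.refl_apply]
    rw [he3R]
    show (d + 1) + ((x : ℕ) - (d + 1)) = (x : ℕ)
    omega
  have hκL : ∀ i : Fin d, ((κ (Sum.inl i)) : ℕ) = (i : ℕ) + 1 := by
    intro i
    rw [hκ]
    simp only [Equiv.trans_apply, Equiv.sumCongr_apply, Sum.map_inl, Equiv.refl_apply]
    rw [hcLow (e (Sum.inl i)) (by rw [heL]; exact i.isLt), heL]
  have hκR : ∀ s : Fin (m + n - 2 * d), ((κ (Sum.inr s)) : ℕ)
      = if (s : ℕ) = m + n - 2 * d - 1 then 0 else m + n - d - 1 - (s : ℕ) := by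
    intro s
    rw [hκ]
    simp only [Equiv.trans_apply, Equiv.sumCongr_apply, Sum.map_inr, Fin.revPerm_apply]
    have hv : ((e (Sum.inr s.rev)) : ℕ) = d + (m + n - 2 * d - 1 - (s : ℕ)) := by
      rw [heR]
      congr 1
      rw [Fin.val_rev]
      omega
    by_cases hs : (s : ℕ) = m + n - 2 * d - 1
    · rw [if_pos hs, hcEq _ (by rw [hv]; omega)]
    · rw [if_neg hs, hcGt _ (by rw [hv]; omega), hv]
      omega
  have hρL : ∀ i : Fin d, ((ρ (Sum.inl i)) : ℕ) = (i : ℕ) := by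
    intro i
    rw [hρ]
    simp only [Equiv.trans_apply, Equiv.sumCongr_apply, Sum.map_inl, Equiv.refl_apply]
    exact heL i
  have hρA : ∀ a : Fin (n - d),
      ((ρ (Sum.inr (e2 (Sum.inl a)))) : ℕ) = d + (n - d - 1 - (a : ℕ)) := by
    intro a
    rw [hρ]
    simp only [Equiv.trans_apply, Equiv.sumCongr_apply, Sum.map_inr]
    rw [hπL a, heR, he2L, Fin.val_rev]
    omega
  have hρB : ∀ b : Fin (m - d),
      ((ρ (Sum.inr (e2 (Sum.inr b)))) : ℕ) = d + (n - d) + (m - d - 1 - (b : ℕ)) := by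
    intro b
    rw [hρ]
    simp only [Equiv.trans_apply, Equiv.sumCongr_apply, Sum.map_inr]
    rw [hπR b, heR, he2R, Fin.val_rev]
    omega
  have hB0 : ∀ i j : Fin (m + n - d), (j : ℕ) = 0 →
      (A * T) i j = ∑ k : Fin (m + n - d), A i k * X ^ (k : ℕ) := by
    intro i j hj
    rw [Matrix.mul_apply]
    apply Finset.sum_congr rfl
    intro k _
    congr 1
    rw [hT]
    simp [hj]
  have hB1 : ∀ i j : Fin (m + n - d), (j : ℕ) ≠ 0 → (A * T) i j = A i j := by
    intro i j hj
    rw [Matrix.mul_apply]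
    have hTv : ∀ k, T k j = if k = j then 1 else 0 := by
      intro k; rw [hT]; simp [hj]
    simp only [hTv, mul_ite, mul_one, mul_zero]
    simp
  have hfd : f.natDegree < m + 1 := by
    have := Polynomial.natDegree_le_iff_degree_le.mpr hf; omega
  have hgd : g.natDegree < n + 1 := by
    have := Polynomial.natDegree_le_iff_degree_le.mpr hg; omega
  have hsumf : ∀ iv : Fin (m + n - d), d ≤ (iv : ℕ) → (iv : ℕ) < d + (n - d) →
      (∑ k : Fin (m + n - d), A iv k * X ^ (k : ℕ)) = X ^ ((iv : ℕ) - d) * f := by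
    intro iv h1 h2
    rw [← aux_row (m + n - d) m ((iv : ℕ) - d) f hfd (by omega)]
    apply Finset.sum_congr rfl
    intro k _
    congr 1
    rw [hA]
    simp only [Matrix.of_apply]
    rw [if_neg (by omega), if_pos h2]
  have hsumg : ∀ iv : Fin (m + n - d), d + (n - d) ≤ (iv : ℕ) →
      (∑ k : Fin (m + n - d), A iv k * X ^ (k : ℕ))
        = X ^ ((iv : ℕ) - (d + (n - d))) * g := by
    intro iv h1
    rw [← aux_row (m + n - d) n ((iv : ℕ) - (d + (n - d))) g hgd (by omega)]
    apply Finset.sum_congr rfl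
    intro k _
    congr 1
    rw [hA]
    simp only [Matrix.of_apply]
    rw [if_neg (by omega), if_neg (by omega)]
  have hsumband : ∀ iv : Fin (m + n - d), (iv : ℕ) < d →
      (∑ k : Fin (m + n - d), A iv k * X ^ (k : ℕ)) = 0 := by
    intro iv h1
    rw [← aux_band (m + n - d) (iv : ℕ) (by omega)]
    apply Finset.sum_congr rfl
    intro k _
    congr 1
    rw [hA]
    simp only [Matrix.of_apply]
    rw [if_pos h1]
  have h12 : ((A * T).submatrix ρ κ).toBlocks₁₂ = 0 := by
    refine Matrix.ext fun i s => ?_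
    simp only [Matrix.toBlocks₁₂, Matrix.of_apply, Matrix.submatrix_apply, Matrix.zero_apply]
    by_cases hs : (s : ℕ) = m + n - 2 * d - 1
    · rw [hB0 _ _ (by rw [hκR, if_pos hs])]
      exact hsumband _ (by rw [hρL]; exact i.isLt)
    · rw [hB1 _ _ (by rw [hκR, if_neg hs]; omega)]
      rw [hA]
      simp only [Matrix.of_apply]
      rw [if_pos (by rw [hρL]; exact i.isLt),
        if_neg (by rw [hκR, if_neg hs, hρL]; omega),
        if_neg (by rw [hκR, if_neg hs, hρL]; omega)]
  have h11 : ((A * T).submatrix ρ κ).toBlocks₁₁.det = 1 := by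
    have htri : ((A * T).submatrix ρ κ).toBlocks₁₁.BlockTriangular OrderDual.toDual := by
      intro i j hij
      have hij' : (i : ℕ) < (j : ℕ) := hij
      simp only [Matrix.toBlocks₁₁, Matrix.of_apply, Matrix.submatrix_apply]
      rw [hB1 _ _ (by rw [hκL]; omega)]
      rw [hA]
      simp only [Matrix.of_apply]
      rw [if_pos (by rw [hρL]; exact i.isLt),
        if_neg (by rw [hκL, hρL]; omega),
        if_neg (by rw [hκL, hρL]; omega)]
    rw [Matrix.det_of_lowerTriangular _ htri]
    apply Finset.prod_eq_one
    intro i _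
    simp only [Matrix.toBlocks₁₁, Matrix.of_apply, Matrix.submatrix_apply]
    rw [hB1 _ _ (by rw [hκL]; omega)]
    rw [hA]
    simp only [Matrix.of_apply]
    rw [if_pos (by rw [hρL]; exact i.isLt),
      if_neg (by rw [hκL, hρL]; omega),
      if_pos (by rw [hκL, hρL])]
  have h22 : ((A * T).submatrix ρ κ).toBlocks₂₂ = Matrix.of (fun i j : Fin (m + n - 2 * d) =>
      if (j : ℕ) = m + n - 2 * d - 1 then
        (if (i : ℕ) < n - d then X ^ (n - d - 1 - (i : ℕ)) * f
         else X ^ (m - d - 1 - ((i : ℕ) - (n - d))) * g)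
      else
        if (i : ℕ) < n - d then
          (if (i : ℕ) ≤ (j : ℕ) ∧ (j : ℕ) ≤ m + (i : ℕ) then
            C (f.coeff (m + (i : ℕ) - (j : ℕ))) else 0)
        else
          (if (i : ℕ) - (n - d) ≤ (j : ℕ) ∧ (j : ℕ) ≤ n + ((i : ℕ) - (n - d)) then
            C (g.coeff (n + ((i : ℕ) - (n - d)) - (j : ℕ))) else 0)) := by
    refine Matrix.ext fun r s => ?_
    simp only [Matrix.toBlocks₂₂, Matrix.of_apply, Matrix.submatrix_apply]
    rcases hr : e2.symm r with a | b
    · have hra : e2 (Sum.inl a) = r := by rw [← hr, Equiv.apply_symm_apply]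
      rw [← hra]
      by_cases hs : (s : ℕ) = m + n - 2 * d - 1
      · rw [hB0 _ _ (by rw [hκR, if_pos hs])]
        rw [hsumf _ (by rw [hρA]; omega) (by rw [hρA]; omega)]
        rw [if_pos hs, if_pos (by rw [he2L]; exact a.isLt)]
        rw [hρA, he2L]
        congr 2
        omega
      · rw [hB1 _ _ (by rw [hκR, if_neg hs]; omega)]
        rw [hA]
        simp only [Matrix.of_apply]
        rw [if_neg (by rw [hρA]; omega), if_pos (by rw [hρA]; omega)]
        rw [if_neg hs,
          if_pos (show ((e2 (Sum.inl a)) : ℕ) < n - d by rw [he2L]; exact a.isLt)]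
        have hρv : ((ρ (Sum.inr (e2 (Sum.inl a)))) : ℕ) = d + (n - d - 1 - (a : ℕ)) := hρA a
        have hκv : ((κ (Sum.inr s)) : ℕ) = m + n - d - 1 - (s : ℕ) := by
          rw [hκR, if_neg hs]
        have hrv2 : ((e2 (Sum.inl a)) : ℕ) = (a : ℕ) := he2L a
        by_cases hcond : ((e2 (Sum.inl a)) : ℕ) ≤ (s : ℕ) ∧ (s : ℕ) ≤ m + ((e2 (Sum.inl a)) : ℕ)
        · rw [if_pos (by rw [hκv, hρv]; rw [hrv2] at hcond; omega), if_pos hcond]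
          congr 2
          rw [hκv, hρv, hrv2]
          rw [hrv2] at hcond
          omega
        · rw [if_neg (by rw [hκv, hρv]; rw [hrv2] at hcond; omega), if_neg hcond]
    · have hra : e2 (Sum.inr b) = r := by rw [← hr, Equiv.apply_symm_apply]
      rw [← hra]
      by_cases hs : (s : ℕ) = m + n - 2 * d - 1
      · rw [hB0 _ _ (by rw [hκR, if_pos hs])]
        rw [hsumg _ (by rw [hρB]; omega)]
        rw [if_pos hs, if_neg (by rw [he2R]; omega)]
        rw [hρB, he2R]
        congr 2
        omega
      · rw [hB1 _ _ (by rw [hκR, if_neg hs]; omega)]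
        rw [hA]
        simp only [Matrix.of_apply]
        rw [if_neg (by rw [hρB]; omega), if_neg (by rw [hρB]; omega)]
        rw [if_neg hs,
          if_neg (show ¬((e2 (Sum.inr b)) : ℕ) < n - d by rw [he2R]; omega)]
        have hρv : ((ρ (Sum.inr (e2 (Sum.inr b)))) : ℕ)
            = d + (n - d) + (m - d - 1 - (b : ℕ)) := hρB b
        have hκv : ((κ (Sum.inr s)) : ℕ) = m + n - d - 1 - (s : ℕ) := by
          rw [hκR, if_neg hs]
        have hrv2 : ((e2 (Sum.inr b)) : ℕ) = (n - d) + (b : ℕ) := he2R b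
        by_cases hcond : ((e2 (Sum.inr b)) : ℕ) - (n - d) ≤ (s : ℕ)
            ∧ (s : ℕ) ≤ n + (((e2 (Sum.inr b)) : ℕ) - (n - d))
        · rw [if_pos (by rw [hκv, hρv]; rw [hrv2] at hcond; omega), if_pos hcond]
          congr 2
          rw [hκv, hρv, hrv2]
          rw [hrv2] at hcond
          omega
        · rw [if_neg (by rw [hκv, hρv]; rw [hrv2] at hcond; omega), if_neg hcond]
  have hstep1 : (A * T).submatrix ⇑ρ ⇑κ = ((A * T).submatrix id ⇑σ).submatrix ⇑ρ ⇑ρ := by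
    refine Matrix.ext fun i j => ?_
    simp only [Matrix.submatrix_apply, hσ, Equiv.trans_apply, Equiv.symm_apply_apply, id]
  have hdet1 : ((A * T).submatrix ⇑ρ ⇑κ).det = Equiv.Perm.sign σ * (A * T).det := by
    rw [hstep1, Matrix.det_submatrix_equiv_self, Matrix.det_permute']
  have hdet2 : ((A * T).submatrix ⇑ρ ⇑κ).det = sres m n d f g := by
    conv_lhs => rw [← Matrix.fromBlocks_toBlocks ((A * T).submatrix ⇑ρ ⇑κ), h12]
    rw [Matrix.det_fromBlocks_zero₁₂, h11, one_mul, h22]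
    rfl
  have hsplit : σ = (ρ.symm.trans e).trans (e.symm.trans κ) := by
    rw [hσ]
    ext x
    simp
  have hs1 : Equiv.Perm.sign (ρ.symm.trans e) = Equiv.Perm.sign π := by
    have hh : ρ.symm.trans e
        = e.permCongr (Equiv.sumCongr (Equiv.refl (Fin d)) π).symm := by
      ext x
      rw [hρ]
      simp [Equiv.permCongr_apply]
    rw [hh, Equiv.Perm.sign_permCongr, Equiv.Perm.sign_symm, Equiv.Perm.sign_sumCongr]
    simp
  have hs2 : Equiv.Perm.sign (e.symm.trans κ)
      = (-1 : ℤˣ) ^ d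
        * Equiv.Perm.sign (Fin.revPerm : Equiv.Perm (Fin (m + n - 2 * d))) := by
    have hh : e.symm.trans κ
        = (e.permCongr (Equiv.sumCongr (Equiv.refl (Fin d))
            (Fin.revPerm : Equiv.Perm (Fin (m + n - 2 * d))))).trans c := by
      ext x
      rw [hκ]
      simp [Equiv.permCongr_apply]
    rw [hh]
    rw [show (e.permCongr (Equiv.sumCongr (Equiv.refl (Fin d))
        (Fin.revPerm : Equiv.Perm (Fin (m + n - 2 * d))))).trans c
      = c * (e.permCongr (Equiv.sumCongr (Equiv.refl (Fin d))
        (Fin.revPerm : Equiv.Perm (Fin (m + n - 2 * d))))) from rfl]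
    rw [_root_.map_mul, Equiv.Perm.sign_permCongr, Equiv.Perm.sign_sumCongr,
      Equiv.Perm.sign_permCongr, Equiv.Perm.sign_sumCongr, sign_finRotate]
    simp
  have hφ : π.trans (Fin.revPerm : Equiv.Perm (Fin (m + n - 2 * d)))
      = (finRotate (m + n - 2 * d)) ^ (m - d) := by
    refine Equiv.ext fun x => Fin.val_injective ?_
    rw [Equiv.trans_apply, Fin.revPerm_apply, rot_pow_val]
    rcases hx : e2.symm x with a | b
    · have hxa : e2 (Sum.inl a) = x := by rw [← hx, Equiv.apply_symm_apply]
      have h1 : ((π (e2 (Sum.inl a))) : ℕ) = n - d - 1 - (a : ℕ) := by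
        rw [hπL, he2L, Fin.val_rev]
        omega
      rw [← hxa, Fin.val_rev, h1, he2L, Nat.mod_eq_of_lt (by omega)]
      omega
    · have hxa : e2 (Sum.inr b) = x := by rw [← hx, Equiv.apply_symm_apply]
      have h1 : ((π (e2 (Sum.inr b))) : ℕ) = (n - d) + (m - d - 1 - (b : ℕ)) := by
        rw [hπR, he2R, Fin.val_rev]
        omega
      rw [← hxa, Fin.val_rev, h1, he2R]
      rw [show (n - d) + (b : ℕ) + (m - d) = (m + n - 2 * d) + (b : ℕ) by omega]
      rw [Nat.add_mod_left, Nat.mod_eq_of_lt (show (b : ℕ) < m + n - 2 * d by omega)]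
      omega
  have hflip : Equiv.Perm.sign π
        * Equiv.Perm.sign (Fin.revPerm : Equiv.Perm (Fin (m + n - 2 * d)))
      = (-1 : ℤˣ) ^ ((n - d) * (m - d)) := by
    have h1 : Equiv.Perm.sign (π.trans (Fin.revPerm : Equiv.Perm (Fin (m + n - 2 * d))))
        = Equiv.Perm.sign π
          * Equiv.Perm.sign (Fin.revPerm : Equiv.Perm (Fin (m + n - 2 * d))) := by
      rw [show π.trans (Fin.revPerm : Equiv.Perm (Fin (m + n - 2 * d)))
        = (Fin.revPerm : Equiv.Perm (Fin (m + n - 2 * d))) * π from rfl]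
      rw [_root_.map_mul]
      exact mul_comm _ _
    rw [← h1, hφ, _root_.map_pow, sign_rot (by omega), ← pow_mul]
    rw [show m + n - 2 * d - 1 = (n - d) + (m - d) - 1 by omega]
    exact negOne_pow_aux (n - d) (m - d)
  have hσval : Equiv.Perm.sign σ = (-1 : ℤˣ) ^ (d + (n - d) * (m - d)) := by
    rw [hsplit, show (ρ.symm.trans e).trans (e.symm.trans κ)
      = (e.symm.trans κ) * (ρ.symm.trans e) from rfl, _root_.map_mul, hs1, hs2]
    rw [mul_assoc, mul_comm
      (Equiv.Perm.sign (Fin.revPerm : Equiv.Perm (Fin (m + n - 2 * d))))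
      (Equiv.Perm.sign π), hflip, ← pow_add]
  rw [← hdet2, hdet1, hσval, Matrix.det_mul, hdetT, mul_one]
  push_cast
  ring
end

section
/- Laplace-type splitting identity: let E = (0,…,d−1) and let A', B' be lists with |A'| = p, |B'| = q, p+q = d. Then Σ_{P ⊂ E, |P| = p} sg(P,E)·det⟨x−t,A'⟩_P · det⟨x−t,B'⟩_{E∖P} = det⟨x−t, A'∪B'⟩_d = R(x,A')·R(x,B')·V(A'∪B'), where the sum is over sublists P of size p and sg(P,E) is the sign of the shuffle permutation taking E to P∪(E∖P). -/
open Polynomial Matrix Finset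

namespace Stmt13Aux

variable {p q : ℕ}

def shufFun (P : Finset (Fin (p+q))) (hP : P.card = p) (hPc : Pᶜ.card = q) :
    Fin (p+q) → Fin (p+q) :=
  Fin.addCases (fun i => P.orderEmbOfFin hP i) (fun i => Pᶜ.orderEmbOfFin hPc i)

lemma shufFun_bij (P : Finset (Fin (p+q))) (hP : P.card = p) (hPc : Pᶜ.card = q) :
    Function.Bijective (shufFun P hP hPc) := by
  rw [Fintype.bijective_iff_injective_and_card]
  refine ⟨fun x y hxy => ?_, rfl⟩
  induction x using Fin.addCases with
  | left i =>
    induction y using Fin.addCases with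
    | left j =>
      simp only [shufFun, Fin.addCases_left] at hxy
      exact congrArg _ ((P.orderEmbOfFin hP).injective hxy)
    | right j =>
      simp only [shufFun, Fin.addCases_left, Fin.addCases_right] at hxy
      have h1 := P.orderEmbOfFin_mem hP i
      have h2 := Pᶜ.orderEmbOfFin_mem hPc j
      rw [hxy] at h1
      exact absurd h1 (Finset.mem_compl.mp h2)
  | right i =>
    induction y using Fin.addCases with
    | left j =>
      simp only [shufFun, Fin.addCases_left, Fin.addCases_right] at hxy
      have h1 := P.orderEmbOfFin_mem hP j
      have h2 := Pᶜ.orderEmbOfFin_mem hPc i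
      rw [hxy] at h2
      exact absurd h1 (Finset.mem_compl.mp h2)
    | right j =>
      simp only [shufFun, Fin.addCases_right] at hxy
      exact congrArg _ ((Pᶜ.orderEmbOfFin hPc).injective hxy)

noncomputable def shuf (P : Finset (Fin (p+q))) (hP : P.card = p) (hPc : Pᶜ.card = q) :
    Equiv.Perm (Fin (p+q)) :=
  Equiv.ofBijective _ (shufFun_bij P hP hPc)

@[simp] lemma shuf_castAdd (P : Finset (Fin (p+q))) (hP : P.card = p) (hPc : Pᶜ.card = q)
    (i : Fin p) : shuf P hP hPc (Fin.castAdd q i) = P.orderEmbOfFin hP i := by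
  simp [shuf, shufFun, Equiv.ofBijective]

@[simp] lemma shuf_natAdd (P : Finset (Fin (p+q))) (hP : P.card = p) (hPc : Pᶜ.card = q)
    (i : Fin q) : shuf P hP hPc (Fin.natAdd p i) = Pᶜ.orderEmbOfFin hPc i := by
  simp [shuf, shufFun, Equiv.ofBijective]


lemma shuf_step (P : Finset (Fin (p+q))) (hP : P.card = p) (hPc : Pᶜ.card = q)
    (e e' : Fin (p+q)) (he : e ∈ P) (he0 : (e : ℕ) ≠ 0)
    (he' : (e' : ℕ) = (e : ℕ) - 1) (he'P : e' ∉ P)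
    (hP' : (insert e' (P.erase e)).card = p)
    (hP'c : (insert e' (P.erase e))ᶜ.card = q) :
    shuf P hP hPc = Equiv.swap e' e * shuf (insert e' (P.erase e)) hP' hP'c := by
  have hee' : e' ≠ e := fun h => by rw [h] at he'; omega
  set P' := insert e' (P.erase e) with hP'def
  have hmemP' : ∀ x, x ∈ P' ↔ x = e' ∨ (x ∈ P ∧ x ≠ e) := by
    intro x
    simp only [hP'def, Finset.mem_insert, Finset.mem_erase]
    tauto
  have heP' : e ∉ P' := by
    rw [hmemP']
    push_neg
    exact ⟨hee'.symm, fun _ => rfl⟩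
  have eA : (fun i : Fin p => Equiv.swap e' e (P'.orderEmbOfFin hP' i))
      = ⇑(P.orderEmbOfFin hP) := by
    apply Finset.orderEmbOfFin_unique hP
    · intro i
      rcases (hmemP' _).mp (P'.orderEmbOfFin_mem hP' i) with h | ⟨h1, h2⟩
      · rw [h, Equiv.swap_apply_left]; exact he
      · rw [Equiv.swap_apply_of_ne_of_ne (fun hc => he'P (by rwa [hc] at h1)) h2]; exact h1
    · intro i j hij
      have hvw : P'.orderEmbOfFin hP' i < P'.orderEmbOfFin hP' j :=
        (P'.orderEmbOfFin hP').strictMono hij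
      have hv := (hmemP' _).mp (P'.orderEmbOfFin_mem hP' i)
      have hw := (hmemP' _).mp (P'.orderEmbOfFin_mem hP' j)
      show Equiv.swap e' e (P'.orderEmbOfFin hP' i) < Equiv.swap e' e (P'.orderEmbOfFin hP' j)
      set v := P'.orderEmbOfFin hP' i with hvdef
      set w := P'.orderEmbOfFin hP' j with hwdef
      rw [Fin.lt_def] at hvw ⊢
      by_cases hv' : v = e'
      · rcases hw with h | ⟨h1, h2⟩
        · exact absurd (hv'.trans h.symm) (ne_of_lt (Fin.lt_def.mpr hvw))
        · rw [hv', Equiv.swap_apply_left,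
            Equiv.swap_apply_of_ne_of_ne (fun hc => he'P (by rwa [hc] at h1)) h2]
          have h2' : (w : ℕ) ≠ (e : ℕ) := fun h => h2 (Fin.val_injective h)
          have : (v : ℕ) = (e' : ℕ) := by rw [hv']
          omega
      · rcases hv with h | ⟨h1, h2⟩
        · exact absurd h hv'
        · rw [Equiv.swap_apply_of_ne_of_ne hv' h2]
          by_cases hw' : w = e'
          · rw [hw', Equiv.swap_apply_left]
            have : (w : ℕ) = (e' : ℕ) := by rw [hw']
            omega
          · rcases hw with h | ⟨h3, h4⟩
            · exact absurd h hw'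
            · rw [Equiv.swap_apply_of_ne_of_ne hw' h4]
              exact hvw
  have eB : (fun i : Fin q => Equiv.swap e' e (P'ᶜ.orderEmbOfFin hP'c i))
      = ⇑(Pᶜ.orderEmbOfFin hPc) := by
    apply Finset.orderEmbOfFin_unique hPc
    · intro i
      have hv : P'ᶜ.orderEmbOfFin hP'c i ∉ P' :=
        Finset.mem_compl.mp (P'ᶜ.orderEmbOfFin_mem hP'c i)
      rw [hmemP'] at hv
      push_neg at hv
      obtain ⟨hv1, hv2⟩ := hv
      by_cases hv3 : P'ᶜ.orderEmbOfFin hP'c i = e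
      · rw [hv3, Equiv.swap_apply_right]
        exact Finset.mem_compl.mpr he'P
      · rw [Equiv.swap_apply_of_ne_of_ne hv1 hv3]
        exact Finset.mem_compl.mpr (fun hc => hv3 (hv2 hc))
    · intro i j hij
      have hvw : P'ᶜ.orderEmbOfFin hP'c i < P'ᶜ.orderEmbOfFin hP'c j :=
        (P'ᶜ.orderEmbOfFin hP'c).strictMono hij
      have hv : P'ᶜ.orderEmbOfFin hP'c i ∉ P' :=
        Finset.mem_compl.mp (P'ᶜ.orderEmbOfFin_mem hP'c i)
      have hw : P'ᶜ.orderEmbOfFin hP'c j ∉ P' :=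
        Finset.mem_compl.mp (P'ᶜ.orderEmbOfFin_mem hP'c j)
      rw [hmemP'] at hv hw
      push_neg at hv hw
      obtain ⟨hv1, _⟩ := hv
      obtain ⟨hw1, _⟩ := hw
      show Equiv.swap e' e (P'ᶜ.orderEmbOfFin hP'c i) < Equiv.swap e' e (P'ᶜ.orderEmbOfFin hP'c j)
      set v := P'ᶜ.orderEmbOfFin hP'c i with hvdef
      set w := P'ᶜ.orderEmbOfFin hP'c j with hwdef
      rw [Fin.lt_def] at hvw ⊢
      have hv1' : (v : ℕ) ≠ (e' : ℕ) := fun h => hv1 (Fin.val_injective h)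
      have hw1' : (w : ℕ) ≠ (e' : ℕ) := fun h => hw1 (Fin.val_injective h)
      by_cases hv3 : v = e
      · rw [hv3, Equiv.swap_apply_right]
        by_cases hw3 : w = e
        · exact absurd (hv3.trans hw3.symm) (ne_of_lt (Fin.lt_def.mpr hvw))
        · rw [Equiv.swap_apply_of_ne_of_ne hw1 hw3]
          have : (v : ℕ) = (e : ℕ) := by rw [hv3]
          omega
      · rw [Equiv.swap_apply_of_ne_of_ne hv1 hv3]
        by_cases hw3 : w = e
        · rw [hw3, Equiv.swap_apply_right]
          have hv3' : (v : ℕ) ≠ (e : ℕ) := fun h => hv3 (Fin.val_injective h)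
          have : (w : ℕ) = (e : ℕ) := by rw [hw3]
          omega
        · rw [Equiv.swap_apply_of_ne_of_ne hw1 hw3]
          exact hvw
  apply Equiv.ext
  intro x
  induction x using Fin.addCases with
  | left i =>
    rw [Equiv.Perm.mul_apply, shuf_castAdd, shuf_castAdd]
    exact (congrFun eA i).symm
  | right i =>
    rw [Equiv.Perm.mul_apply, shuf_natAdd, shuf_natAdd]
    exact (congrFun eB i).symm


lemma down_closed_eq {n : ℕ} (P : Finset (Fin n))
    (h : ∀ x ∈ P, ∀ y, y ≤ x → y ∈ P) :
    P = univ.filter fun x : Fin n => (x : ℕ) < P.card := by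
  ext x
  simp only [mem_filter, mem_univ, true_and]
  constructor
  · intro hx
    have hs : Finset.Iic x ⊆ P := fun y hy => h x hx y (Finset.mem_Iic.mp hy)
    have := Finset.card_le_card hs
    rw [Fin.card_Iic] at this
    omega
  · intro hx
    by_contra hxP
    have hs : P ⊆ Finset.Iio x := by
      intro z hz
      rw [Finset.mem_Iio]
      by_contra hzx
      exact hxP (h z hz x (le_of_not_gt hzx))
    have := Finset.card_le_card hs
    rw [Fin.card_Iio] at this
    omega

lemma base_eq_map : (univ.filter fun x : Fin (p+q) => (x : ℕ) < p)
    = Finset.map (Fin.castAddEmb q) univ := by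
  ext x
  simp only [mem_filter, mem_univ, true_and, Finset.mem_map]
  constructor
  · intro hx
    exact ⟨⟨(x : ℕ), hx⟩, by simp [Fin.castAddEmb, Fin.ext_iff]⟩
  · rintro ⟨i, rfl⟩
    simpa [Fin.castAddEmb] using i.2

lemma card_base : (univ.filter fun x : Fin (p+q) => (x : ℕ) < p).card = p := by
  rw [base_eq_map (p:=p) (q:=q), Finset.card_map, Finset.card_univ, Fintype.card_fin]

lemma sum_base : (∑ e ∈ univ.filter (fun x : Fin (p+q) => (x : ℕ) < p), (e : ℕ))
    = p * (p - 1) / 2 := by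
  rw [base_eq_map (p:=p) (q:=q), Finset.sum_map]
  have : ∀ x : Fin p, ((Fin.castAddEmb q x : Fin (p+q)) : ℕ) = (x : ℕ) := fun x => rfl
  simp only [this]
  rw [Fin.sum_univ_eq_sum_range (fun i => i) p, ← Finset.sum_range_id]


lemma compl_card (P : Finset (Fin (p+q))) (hP : P.card = p) : Pᶜ.card = q := by
  rw [Finset.card_compl, Fintype.card_fin, hP]
  omega

lemma sign_shuf (N : ℕ) : ∀ (P : Finset (Fin (p+q))) (hP : P.card = p) (hPc : Pᶜ.card = q),
    (∑ e ∈ P, (e : ℕ)) = N →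
    Equiv.Perm.sign (shuf P hP hPc) = (-1) ^ (N + p * (p - 1) / 2) := by
  induction N using Nat.strong_induction_on with
  | _ N ih =>
    intro P hP hPc hsum
    by_cases hdc : ∀ x ∈ P, ∀ y, y ≤ x → y ∈ P
    · have hPB : P = univ.filter fun x : Fin (p+q) => (x : ℕ) < p := by
        have h := down_closed_eq P hdc
        rwa [hP] at h
      subst hPB
      have e1 : (fun i : Fin p => Fin.castAdd q i)
          = ⇑((univ.filter fun x : Fin (p+q) => (x : ℕ) < p).orderEmbOfFin hP) :=
        Finset.orderEmbOfFin_unique hP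
          (fun i => Finset.mem_filter.mpr ⟨mem_univ _, by simpa using i.2⟩)
          (Fin.strictMono_castAdd q)
      have e2 : (fun i : Fin q => Fin.natAdd p i)
          = ⇑(((univ.filter fun x : Fin (p+q) => (x : ℕ) < p))ᶜ.orderEmbOfFin hPc) :=
        Finset.orderEmbOfFin_unique hPc
          (fun i => Finset.mem_compl.mpr (by simp))
          (Fin.strictMono_natAdd p)
      have h1 : shuf _ hP hPc = 1 := by
        apply Equiv.ext
        intro x
        induction x using Fin.addCases with
        | left i =>
          rw [shuf_castAdd, Equiv.Perm.one_apply]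
          exact (congrFun e1 i).symm
        | right i =>
          rw [shuf_natAdd, Equiv.Perm.one_apply]
          exact (congrFun e2 i).symm
      have hN : N = p * (p - 1) / 2 := by rw [← hsum, sum_base]
      rw [h1, _root_.map_one, hN]
      exact (Even.neg_one_pow ⟨p * (p - 1) / 2, by ring⟩).symm
    · push_neg at hdc
      obtain ⟨x, hxP, y, hyx, hyP⟩ := hdc
      have hSne : (P.filter fun z => y < z).Nonempty :=
        ⟨x, Finset.mem_filter.mpr ⟨hxP, lt_of_le_of_ne hyx (fun h => hyP (h ▸ hxP))⟩⟩
      have heS := Finset.min'_mem _ hSne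
      rw [Finset.mem_filter] at heS
      obtain ⟨heP, hye⟩ := heS
      set e := (P.filter fun z => y < z).min' hSne with hedef
      have he0 : (e : ℕ) ≠ 0 := by
        have := Fin.lt_def.mp hye
        omega
      have he'lt : (e : ℕ) - 1 < p + q := by
        have := e.2
        omega
      set e' : Fin (p+q) := ⟨(e : ℕ) - 1, he'lt⟩ with he'def
      have he' : (e' : ℕ) = (e : ℕ) - 1 := rfl
      have hee' : e' ≠ e := by
        intro h
        have : (e' : ℕ) = (e : ℕ) := by rw [h]
        omega
      have he'P : e' ∉ P := by
        intro hc
        by_cases hy' : y = e'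
        · exact hyP (hy' ▸ hc)
        · have hyv : (y : ℕ) ≠ (e' : ℕ) := fun h => hy' (Fin.val_injective h)
          have hylt : y < e' := by
            rw [Fin.lt_def]
            have := Fin.lt_def.mp hye
            simp only [he'def] at hyv ⊢
            omega
          have hmem : e' ∈ P.filter fun z => y < z := Finset.mem_filter.mpr ⟨hc, hylt⟩
          have hmin := Finset.min'_le _ _ hmem
          rw [← hedef, Fin.le_def] at hmin
          omega
      have hp1 : 1 ≤ p := by
        rw [← hP]
        exact Finset.card_pos.mpr ⟨e, heP⟩
      have hP' : (insert e' (P.erase e)).card = p := by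
        rw [Finset.card_insert_of_notMem (fun hc => he'P (Finset.mem_of_mem_erase hc)),
          Finset.card_erase_of_mem heP, hP]
        omega
      have hP'c : (insert e' (P.erase e))ᶜ.card = q := compl_card _ hP'
      have hNe : (e : ℕ) ≤ N := by
        rw [← hsum]
        exact Finset.single_le_sum (fun x _ => Nat.zero_le _) heP
      have hsum' : (∑ x ∈ insert e' (P.erase e), (x : ℕ)) = N - 1 := by
        rw [Finset.sum_insert (fun hc => he'P (Finset.mem_of_mem_erase hc))]
        have herase : (e : ℕ) + (∑ x ∈ P.erase e, (x : ℕ)) = N := by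
          rw [← hsum]
          exact Finset.add_sum_erase _ _ heP
        omega
      rw [shuf_step P hP hPc e e' heP he0 he' he'P hP' hP'c, _root_.map_mul,
        Equiv.Perm.sign_swap hee', ih (N - 1) (by omega) _ hP' hP'c hsum', ← pow_succ']
      congr 1
      omega


def blk (σ₁ : Equiv.Perm (Fin p)) (σ₂ : Equiv.Perm (Fin q)) : Equiv.Perm (Fin (p+q)) :=
  finSumFinEquiv.permCongr (Equiv.sumCongr σ₁ σ₂)

@[simp] lemma blk_castAdd (σ₁ : Equiv.Perm (Fin p)) (σ₂ : Equiv.Perm (Fin q)) (i : Fin p) :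
    blk σ₁ σ₂ (Fin.castAdd q i) = Fin.castAdd q (σ₁ i) := by
  simp [blk, Equiv.permCongr_apply]

@[simp] lemma blk_natAdd (σ₁ : Equiv.Perm (Fin p)) (σ₂ : Equiv.Perm (Fin q)) (i : Fin q) :
    blk σ₁ σ₂ (Fin.natAdd p i) = Fin.natAdd p (σ₂ i) := by
  simp [blk, Equiv.permCongr_apply]

lemma sign_blk (σ₁ : Equiv.Perm (Fin p)) (σ₂ : Equiv.Perm (Fin q)) :
    Equiv.Perm.sign (blk σ₁ σ₂) = Equiv.Perm.sign σ₁ * Equiv.Perm.sign σ₂ := by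
  rw [blk, Equiv.Perm.sign_permCongr, Equiv.Perm.sign_sumCongr]

lemma blk_injective : Function.Injective fun z : Equiv.Perm (Fin p) × Equiv.Perm (Fin q) =>
    blk z.1 z.2 := by
  rintro ⟨σ₁, σ₂⟩ ⟨τ₁, τ₂⟩ h
  simp only at h
  have h1 : σ₁ = τ₁ := by
    apply Equiv.ext; intro i
    have := congrArg (fun f : Equiv.Perm (Fin (p+q)) => f (Fin.castAdd q i)) h
    simp only [blk_castAdd] at this
    exact (Fin.strictMono_castAdd q).injective this
  have h2 : σ₂ = τ₂ := by
    apply Equiv.ext; intro i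
    have := congrArg (fun f : Equiv.Perm (Fin (p+q)) => f (Fin.natAdd p i)) h
    simp only [blk_natAdd] at this
    exact (Fin.strictMono_natAdd p).injective this
  rw [Prod.mk.injEq]
  exact ⟨h1, h2⟩

def rsel (P : Finset (Fin (p+q))) (i : ℕ) : ℕ := ((P.sort (· ≤ ·)).map Fin.val).getD i 0

lemma rsel_eq {k : ℕ} (P : Finset (Fin (p+q))) (hP : P.card = k) (i : Fin k) :
    rsel P (i : ℕ) = ((P.orderEmbOfFin hP i : Fin (p+q)) : ℕ) := by
  have hlen : ((P.sort (· ≤ ·)).map Fin.val).length = k := by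
    rw [List.length_map, Finset.length_sort, hP]
  rw [rsel, List.getD_eq_getElem _ _ (by rw [hlen]; exact i.2), List.getElem_map,
    Finset.orderEmbOfFin_apply]
  congr 1


lemma fiber_eq (P : Finset (Fin (p+q))) (hP : P.card = p) (hPc : Pᶜ.card = q) :
    (univ : Finset (Equiv.Perm (Fin (p+q)))).filter
        (fun σ => Finset.image (fun i : Fin p => σ (Fin.castAdd q i)) univ = P)
      = Finset.image (fun z : Equiv.Perm (Fin p) × Equiv.Perm (Fin q) =>
          shuf P hP hPc * blk z.1 z.2) univ := by
  ext σ
  simp only [Finset.mem_filter, Finset.mem_image, Finset.mem_univ, true_and]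
  constructor
  · intro hkey
    have hmem1 : ∀ i : Fin p, σ (Fin.castAdd q i) ∈ P := fun i => by
      rw [← hkey]; exact Finset.mem_image_of_mem _ (mem_univ _)
    have hmem2 : ∀ i : Fin q, σ (Fin.natAdd p i) ∈ Pᶜ := by
      intro i
      rw [Finset.mem_compl, ← hkey]
      intro hc
      rw [Finset.mem_image] at hc
      obtain ⟨j, _, hj⟩ := hc
      have hj' := σ.injective hj
      have h1 : ((Fin.castAdd q j : Fin (p+q)) : ℕ) = ((Fin.natAdd p i : Fin (p+q)) : ℕ) := by
        rw [hj']
      simp only [Fin.coe_castAdd, Fin.coe_natAdd] at h1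
      have := j.2
      omega
    have hg₁inj : Function.Injective (fun i : Fin p =>
        (P.orderIsoOfFin hP).symm ⟨σ (Fin.castAdd q i), hmem1 i⟩) := by
      intro i j hij
      simp only at hij
      have h2 := congrArg (fun x => ((P.orderIsoOfFin hP x : Fin (p+q)))) hij
      simp only [OrderIso.apply_symm_apply] at h2
      exact (Fin.strictMono_castAdd q).injective (σ.injective h2)
    have hg₂inj : Function.Injective (fun i : Fin q =>
        (Pᶜ.orderIsoOfFin hPc).symm ⟨σ (Fin.natAdd p i), hmem2 i⟩) := by
      intro i j hij
      simp only at hij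
      have h2 := congrArg (fun x => ((Pᶜ.orderIsoOfFin hPc x : Fin (p+q)))) hij
      simp only [OrderIso.apply_symm_apply] at h2
      exact (Fin.strictMono_natAdd p).injective (σ.injective h2)
    refine ⟨(Equiv.ofBijective _ (Finite.injective_iff_bijective.mp hg₁inj),
      Equiv.ofBijective _ (Finite.injective_iff_bijective.mp hg₂inj)), ?_⟩
    apply Equiv.ext
    intro x
    induction x using Fin.addCases with
    | left i =>
      rw [Equiv.Perm.mul_apply, blk_castAdd, shuf_castAdd]
      show (P.orderEmbOfFin hP) ((P.orderIsoOfFin hP).symm ⟨σ (Fin.castAdd q i), hmem1 i⟩)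
        = σ (Fin.castAdd q i)
      rw [← Finset.coe_orderIsoOfFin_apply, OrderIso.apply_symm_apply]
    | right i =>
      rw [Equiv.Perm.mul_apply, blk_natAdd, shuf_natAdd]
      show (Pᶜ.orderEmbOfFin hPc) ((Pᶜ.orderIsoOfFin hPc).symm ⟨σ (Fin.natAdd p i), hmem2 i⟩)
        = σ (Fin.natAdd p i)
      rw [← Finset.coe_orderIsoOfFin_apply, OrderIso.apply_symm_apply]
  · rintro ⟨⟨σ₁, σ₂⟩, rfl⟩
    dsimp only
    apply Finset.eq_of_subset_of_card_le
    · intro v hv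
      rw [Finset.mem_image] at hv
      obtain ⟨i, _, rfl⟩ := hv
      rw [Equiv.Perm.mul_apply, blk_castAdd, shuf_castAdd]
      exact P.orderEmbOfFin_mem hP _
    · rw [hP, Finset.card_image_of_injective _
        (fun a b hab => (Fin.strictMono_castAdd q).injective
          ((shuf P hP hPc * blk σ₁ σ₂).injective hab) : Function.Injective
          (fun i : Fin p => (shuf P hP hPc * blk σ₁ σ₂) (Fin.castAdd q i))),
        Finset.card_univ, Fintype.card_fin]

lemma laplace {R : Type*} [CommRing R] (G : ℕ → Fin (p+q) → R) :
    (∑ P ∈ Finset.powersetCard p (Finset.univ : Finset (Fin (p + q))),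
        (-1 : R) ^ ((∑ e ∈ P, (e : ℕ)) + p * (p - 1) / 2) *
          Matrix.det (Matrix.of fun i j : Fin p => G (rsel P (i : ℕ)) (Fin.castAdd q j)) *
          Matrix.det (Matrix.of fun i j : Fin q => G (rsel Pᶜ (i : ℕ)) (Fin.natAdd p j)))
      = Matrix.det (Matrix.of fun i j : Fin (p+q) => G (i : ℕ) j) := by
  rw [Matrix.det_apply']
  rw [← Finset.sum_fiberwise_of_maps_to (g := fun σ : Equiv.Perm (Fin (p+q)) =>
        Finset.image (fun i : Fin p => σ (Fin.castAdd q i)) univ)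
      (fun σ _ => Finset.mem_powersetCard_univ.mpr (by
        rw [Finset.card_image_of_injective _
          (fun a b hab => (Fin.strictMono_castAdd q).injective (σ.injective hab) :
            Function.Injective (fun i : Fin p => σ (Fin.castAdd q i))),
          Finset.card_univ, Fintype.card_fin]))]
  apply Finset.sum_congr rfl
  intro P hPmem
  have hP : P.card = p := Finset.mem_powersetCard_univ.mp hPmem
  have hPc : Pᶜ.card = q := compl_card P hP
  rw [fiber_eq P hP hPc, Finset.sum_image
    (fun z _ z' _ h => blk_injective (mul_left_cancel h)), Fintype.sum_prod_type]
  rw [Matrix.det_apply', Matrix.det_apply', mul_assoc, Finset.sum_mul_sum, Finset.mul_sum]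
  apply Finset.sum_congr rfl
  intro σ₁ _
  rw [Finset.mul_sum]
  apply Finset.sum_congr rfl
  intro σ₂ _
  rw [_root_.map_mul, sign_blk, sign_shuf (∑ e ∈ P, (e : ℕ)) P hP hPc rfl,
    Fin.prod_univ_add]
  simp only [Matrix.of_apply, Equiv.Perm.mul_apply, blk_castAdd, blk_natAdd,
    shuf_castAdd, shuf_natAdd, rsel_eq P hP, rsel_eq Pᶜ hPc]
  push_cast
  ring


lemma vand {n : ℕ} {F : Type*} [CommRing F] (c : Fin n → F) :
    Matrix.det (Matrix.of fun i j : Fin n =>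
        C (c j ^ (i : ℕ)) * X - C (c j ^ ((i : ℕ) + 1)))
      = (∏ j, (X - C (c j))) * C (Matrix.det (Matrix.of fun i j : Fin n => c j ^ (i : ℕ))) := by
  have hentry : (Matrix.of fun i j : Fin n => C (c j ^ (i : ℕ)) * X - C (c j ^ ((i : ℕ) + 1)))
      = Matrix.of fun i j : Fin n => (X - C (c j)) * (Matrix.of fun i j : Fin n =>
          C (c j ^ (i : ℕ))) i j := by
    apply Matrix.ext
    intro i j
    simp only [Matrix.of_apply, pow_succ, _root_.map_mul]
    ring
  rw [hentry, Matrix.det_mul_row]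
  congr 1
  have hmap : (Matrix.of fun i j : Fin n => C (c j ^ (i : ℕ)))
      = (Matrix.of fun i j : Fin n => c j ^ (i : ℕ)).map C := by
    ext i j
    simp [Matrix.map_apply]
  rw [hmap, ← RingHom.mapMatrix_apply, ← RingHom.map_det]

end Stmt13Aux

/-- Laplace-type splitting identity: for E = (0,…,d−1), d = p+q,
Σ_{P ⊂ E, |P|=p} sg(P,E) · det⟨x−t,A'⟩_P · det⟨x−t,B'⟩_{E∖P}
  = det⟨x−t,A'∪B'⟩_d = R(x,A')·R(x,B')·V(A'∪B'),
where sg(P,E) = (−1)^{Σ_{e∈P} e + p(p−1)/2} is the sign of the shuffle permutation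
taking E to P ∪ (E∖P). -/
theorem stmt13 {F : Type*} [CommRing F] (p q : ℕ) (A' : Fin p → F) (B' : Fin q → F)
    (hinj : Function.Injective (Fin.append A' B')) :
    (∑ P ∈ Finset.powersetCard p (Finset.univ : Finset (Fin (p + q))),
        (-1 : Polynomial F) ^ ((∑ e ∈ P, (e : ℕ)) + p * (p - 1) / 2) *
          Matrix.det (Matrix.of fun i j : Fin p =>
            let e := ((P.sort (· ≤ ·)).map Fin.val).getD (i : ℕ) 0
            C (A' j ^ e) * X - C (A' j ^ (e + 1))) *
          Matrix.det (Matrix.of fun i j : Fin q =>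
            let e := ((Pᶜ.sort (· ≤ ·)).map Fin.val).getD (i : ℕ) 0
            C (B' j ^ e) * X - C (B' j ^ (e + 1)))) =
        Matrix.det (Matrix.of fun i j : Fin (p + q) =>
          C (Fin.append A' B' j ^ (i : ℕ)) * X - C (Fin.append A' B' j ^ ((i : ℕ) + 1))) ∧
      Matrix.det (Matrix.of fun i j : Fin (p + q) =>
          C (Fin.append A' B' j ^ (i : ℕ)) * X - C (Fin.append A' B' j ^ ((i : ℕ) + 1))) =
        (∏ i, (X - C (A' i))) * (∏ j, (X - C (B' j))) *
          C (Matrix.det (Matrix.of fun i j : Fin (p + q) => Fin.append A' B' j ^ (i : ℕ))) := by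

  constructor
  · have h := Stmt13Aux.laplace (p := p) (q := q) (R := Polynomial F)
      (fun e j => C (Fin.append A' B' j ^ e) * X - C (Fin.append A' B' j ^ (e + 1)))
    rw [← h]
    apply Finset.sum_congr rfl
    intro P _
    have hA : (Matrix.of fun i j : Fin p =>
          let e := ((P.sort (· ≤ ·)).map Fin.val).getD (i : ℕ) 0
          C (A' j ^ e) * X - C (A' j ^ (e + 1)))
        = (Matrix.of fun i j : Fin p =>
            C (Fin.append A' B' (Fin.castAdd q j) ^ Stmt13Aux.rsel P (i : ℕ)) * X -
              C (Fin.append A' B' (Fin.castAdd q j) ^ (Stmt13Aux.rsel P (i : ℕ) + 1))) := by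
      apply Matrix.ext
      intro i j
      show C (A' j ^ (Stmt13Aux.rsel P (i : ℕ))) * X - C (A' j ^ (Stmt13Aux.rsel P (i : ℕ) + 1)) = _
      simp only [Matrix.of_apply, Fin.append_left]
    have hB : (Matrix.of fun i j : Fin q =>
          let e := ((Pᶜ.sort (· ≤ ·)).map Fin.val).getD (i : ℕ) 0
          C (B' j ^ e) * X - C (B' j ^ (e + 1)))
        = (Matrix.of fun i j : Fin q =>
            C (Fin.append A' B' (Fin.natAdd p j) ^ Stmt13Aux.rsel Pᶜ (i : ℕ)) * X -
              C (Fin.append A' B' (Fin.natAdd p j) ^ (Stmt13Aux.rsel Pᶜ (i : ℕ) + 1))) := by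
      apply Matrix.ext
      intro i j
      show C (B' j ^ (Stmt13Aux.rsel Pᶜ (i : ℕ))) * X - C (B' j ^ (Stmt13Aux.rsel Pᶜ (i : ℕ) + 1)) = _
      simp only [Matrix.of_apply, Fin.append_right]
    rw [hA, hB]
  · rw [Stmt13Aux.vand]
    rw [Fin.prod_univ_add]
    simp [Fin.append_left, Fin.append_right]
end

section
/- Consequence of the double-sum formula for two values of p: for admissible d and 0 ≤ p, p' ≤ d with q = d−p, q' = d−p', one has (−1)^{p(m−d)} Sylv^{p,q}(A,B;x)/C(d,p) = (−1)^{p'(m−d)} Sylv^{p',q'}(A,B;x)/C(d,p'); in particular C(d,p)·Sylv^{d,0}(A,B;x) = (−1)^{(d−p)(m−d)}·Sylv^{p,d−p}(A,B;x). -/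
open Polynomial Matrix Finset

/-- Sylvester's double sum Sylv^{p,q}(A,B;x), as an element of F[X]:
Σ_{|A'|=p, |B'|=q} R(x,A') R(x,B') · R(A',B') R(A∖A',B∖B') / (R(A',A∖A') R(B',B∖B')). -/
noncomputable def sylv {F : Type*} [Field F] {m n : ℕ} (A : Fin m → F) (B : Fin n → F)
    (p q : ℕ) : Polynomial F :=
  ∑ A' ∈ Finset.powersetCard p (Finset.univ : Finset (Fin m)),
    ∑ B' ∈ Finset.powersetCard q (Finset.univ : Finset (Fin n)),
      (∏ i ∈ A', (X - C (A i))) * (∏ j ∈ B', (X - C (B j))) *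
        C ((∏ i ∈ A', ∏ j ∈ B', (A i - B j)) * (∏ i ∈ A'ᶜ, ∏ j ∈ B'ᶜ, (A i - B j)) /
            ((∏ i ∈ A', ∏ i' ∈ A'ᶜ, (A i - A i')) * (∏ j ∈ B', ∏ j' ∈ B'ᶜ, (B j - B j'))))

/-!
Fix `A₀`, `B₀`. After the common factor `R(x,A₀) R(x,B₀)` and a sign are pulled out, the terms of
`Sylv` indexed by `(A₀, B₀ ∪ {b})` and by `(A₀ ∪ {a}, B₀)` become the summands at the nodes `b`
and `a` of `Σ_t (x - t) g(t) / ∏_{t' ≠ t} (t - t')`, the nodes `t` running over `A ∪ B` and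
`g = (R(t,A₀) R(t,B₀))²`. This sum vanishes (a Lagrange interpolation identity) as soon as
`deg (x g) + 2 ≤ m + n`, which is where `2d + 1 ≤ m + n` enters. Double counting then gives
`q Sylv^{p,q} = (-1)^(m-d) (p+1) Sylv^{p+1,q-1}` for `p + q = d`, and iterating this yields
`Sylv^{p,d-p} = (-1)^((d-p)(m-d)) C(d,p) Sylv^{d,0}`, from which both identities follow.
-/

open Lagrange Function

section Lagrange
variable {F ι : Type*} [Field F] [DecidableEq ι] {s : Finset ι} {v : ι → F}

theorem sum_eval_div_prod_erase_eq_zero (hv : Set.InjOn v s) {f : F[X]}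
    (hf : f.natDegree + 2 ≤ #s) :
    ∑ i ∈ s, f.eval (v i) / ∏ j ∈ s.erase i, (v i - v j) = 0 := by
  have hlt : f.degree < #s :=
    degree_le_natDegree.trans_lt (by exact_mod_cast (by omega : f.natDegree < #s))
  rw [← coeff_eq_sum hv hlt]
  exact coeff_eq_zero_of_natDegree_lt (by omega)

theorem sum_X_sub_C_mul_C_eval_div_prod_erase_eq_zero (hv : Set.InjOn v s) {g : F[X]}
    (hg : g.natDegree + 3 ≤ #s) :
    ∑ i ∈ s, (X - C (v i)) * C (g.eval (v i) / ∏ j ∈ s.erase i, (v i - v j)) = 0 := by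
  have h₀ := sum_eval_div_prod_erase_eq_zero hv (f := g) (by omega)
  have h₁ := sum_eval_div_prod_erase_eq_zero hv (f := X * g)
    (by rcases eq_or_ne g 0 with rfl | hg₀
        · simp only [mul_zero, natDegree_zero]; omega
        · rw [natDegree_X_mul hg₀]; omega)
  simp only [eval_mul, eval_X, mul_div_assoc] at h₁
  simp only [sub_mul, sum_sub_distrib, ← mul_sum, ← C_mul, ← map_sum, h₀, h₁, map_zero,
    mul_zero, sub_zero]

end Lagrange

theorem prod_sub_eq_neg_one_pow_mul {ι R : Type*} [CommRing R] (s : Finset ι) (f : ι → R)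
    (x : R) : ∏ i ∈ s, (f i - x) = (-1) ^ #s * ∏ i ∈ s, (x - f i) := by
  rw [← prod_neg]
  simp only [neg_sub]

section Products
variable {α β M : Type*} [Fintype α] [DecidableEq α] [CommMonoid M]

theorem prod_univ_erase_eq_prod_mul_prod_compl_insert {s : Finset α} {a : α} (ha : a ∉ s)
    (f : α → M) :
    ∏ i ∈ univ.erase a, f i = (∏ i ∈ s, f i) * ∏ i ∈ (insert a s)ᶜ, f i := by
  rw [← prod_union (disjoint_left.2 fun i hi hi' => by simp_all)]
  congr 1
  ext i
  by_cases i = a <;> by_cases i ∈ s <;> simp_all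

theorem prod_univ_erase_inl [Fintype β] [DecidableEq β] (a : α) (f : α ⊕ β → M) :
    ∏ t ∈ univ.erase (Sum.inl a), f t = (∏ i ∈ univ.erase a, f (.inl i)) * ∏ j, f (.inr j) := by
  rw [← prod_disjSum]
  congr 1
  ext (_ | _) <;> simp

theorem prod_univ_erase_inr [Fintype β] [DecidableEq β] (b : β) (f : α ⊕ β → M) :
    ∏ t ∈ univ.erase (Sum.inr b), f t = (∏ i, f (.inl i)) * ∏ j ∈ univ.erase b, f (.inr j) := by
  rw [← prod_disjSum]
  congr 1
  ext (_ | _) <;> simp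

end Products

theorem sum_powersetCard_sum_compl_insert {α M : Type*} [Fintype α] [DecidableEq α]
    [AddCommMonoid M] (q : ℕ) (f : Finset α → M) :
    ∑ t ∈ powersetCard q univ, ∑ b ∈ tᶜ, f (insert b t) =
      (q + 1) • ∑ u ∈ powersetCard (q + 1) univ, f u := by
  have hcard : ∀ u ∈ powersetCard (q + 1) (univ : Finset α), (q + 1) • f u = ∑ _b ∈ u, f u :=
    fun u hu => by rw [sum_const, mem_powersetCard_univ.1 hu]
  rw [smul_sum, sum_congr rfl hcard, sum_sigma', sum_sigma']
  refine sum_bij' (fun x _ => ⟨insert x.2 x.1, x.2⟩) (fun x _ => ⟨x.1.erase x.2, x.2⟩)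
    ?_ ?_ ?_ ?_ ?_
  · rintro ⟨t, b⟩ h
    simp only [mem_sigma, mem_powersetCard_univ, mem_compl] at h ⊢
    exact ⟨by rw [card_insert_of_notMem h.2, h.1], mem_insert_self _ _⟩
  · rintro ⟨u, b⟩ h
    simp only [mem_sigma, mem_powersetCard_univ, mem_compl] at h ⊢
    exact ⟨by rw [card_erase_of_mem h.2, h.1, Nat.add_sub_cancel], notMem_erase _ _⟩
  · rintro ⟨t, b⟩ h
    simp only [mem_sigma, mem_compl] at h
    simp [erase_insert h.2]
  · rintro ⟨u, b⟩ h
    simp only [mem_sigma] at h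
    simp [insert_erase h.2]
  · rintro ⟨t, b⟩ _
    rfl

section SylvesterDoubleSum
variable {F : Type*} [Field F] {m n : ℕ} (A : Fin m → F) (B : Fin n → F)

noncomputable def sylvCoeff (A' : Finset (Fin m)) (B' : Finset (Fin n)) : F :=
  (∏ i ∈ A', ∏ j ∈ B', (A i - B j)) * (∏ i ∈ A'ᶜ, ∏ j ∈ B'ᶜ, (A i - B j)) /
    ((∏ i ∈ A', ∏ i' ∈ A'ᶜ, (A i - A i')) * (∏ j ∈ B', ∏ j' ∈ B'ᶜ, (B j - B j')))

noncomputable def sylvTerm (A' : Finset (Fin m)) (B' : Finset (Fin n)) : F[X] :=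
  nodal A' A * nodal B' B * C (sylvCoeff A B A' B')

theorem sylv_eq_sum_sylvTerm (p q : ℕ) :
    sylv A B p q = ∑ A' ∈ powersetCard p univ, ∑ B' ∈ powersetCard q univ, sylvTerm A B A' B' :=
  rfl

variable {A B}

theorem sylvCoeff_insert_left (hA : Injective A) (hAB : ∀ i j, A i ≠ B j)
    {A₀ : Finset (Fin m)} (B₀ : Finset (Fin n)) {a : Fin m} (ha : a ∉ A₀) :
    sylvCoeff A B (insert a A₀) B₀ = (-1) ^ #A₀ * sylvCoeff A B A₀ B₀ *
      ((∏ i ∈ A₀, (A a - A i)) * ∏ j ∈ B₀, (A a - B j)) ^ 2 /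
        ((∏ i ∈ univ.erase a, (A a - A i)) * ∏ j, (A a - B j)) := by
  have hcompl : A₀ᶜ = insert a (insert a A₀)ᶜ := by rw [compl_insert, insert_erase (by simpa)]
  have hs : a ∉ (insert a A₀)ᶜ := by simp
  have h₁ : ∏ i ∈ A₀, (A a - A i) ≠ 0 :=
    prod_ne_zero_iff.2 fun i hi => sub_ne_zero.2 fun h => ha (hA h ▸ hi)
  have h₂ : ∏ i ∈ (insert a A₀)ᶜ, (A a - A i) ≠ 0 :=
    prod_ne_zero_iff.2 fun i hi => sub_ne_zero.2 fun h => hs (hA h ▸ hi)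
  have h₃ : ∏ j ∈ B₀, (A a - B j) ≠ 0 := prod_ne_zero_iff.2 fun j _ => sub_ne_zero.2 (hAB a j)
  have h₄ : ∏ j ∈ B₀ᶜ, (A a - B j) ≠ 0 := prod_ne_zero_iff.2 fun j _ => sub_ne_zero.2 (hAB a j)
  rw [sylvCoeff, sylvCoeff, hcompl, prod_univ_erase_eq_prod_mul_prod_compl_insert ha,
    ← prod_mul_prod_compl B₀ fun j => A a - B j]
  simp only [prod_insert ha, prod_insert hs, prod_mul_distrib, prod_sub_eq_neg_one_pow_mul A₀ A]
  field_simp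

theorem sylvCoeff_insert_right (hB : Injective B) (hAB : ∀ i j, A i ≠ B j)
    (A₀ : Finset (Fin m)) {B₀ : Finset (Fin n)} {b : Fin n} (hb : b ∉ B₀) :
    sylvCoeff A B A₀ (insert b B₀) = (-1) ^ (m + #B₀) * sylvCoeff A B A₀ B₀ *
      ((∏ i ∈ A₀, (B b - A i)) * ∏ j ∈ B₀, (B b - B j)) ^ 2 /
        ((∏ i, (B b - A i)) * ∏ j ∈ univ.erase b, (B b - B j)) := by
  have hcompl : B₀ᶜ = insert b (insert b B₀)ᶜ := by rw [compl_insert, insert_erase (by simpa)]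
  have ht : b ∉ (insert b B₀)ᶜ := by simp
  have h₁ : ∏ j ∈ B₀, (B b - B j) ≠ 0 :=
    prod_ne_zero_iff.2 fun j hj => sub_ne_zero.2 fun h => hb (hB h ▸ hj)
  have h₂ : ∏ j ∈ (insert b B₀)ᶜ, (B b - B j) ≠ 0 :=
    prod_ne_zero_iff.2 fun j hj => sub_ne_zero.2 fun h => ht (hB h ▸ hj)
  have h₃ : ∏ i ∈ A₀, (B b - A i) ≠ 0 :=
    prod_ne_zero_iff.2 fun i _ => sub_ne_zero.2 (hAB i b).symm
  have h₄ : ∏ i ∈ A₀ᶜ, (B b - A i) ≠ 0 :=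
    prod_ne_zero_iff.2 fun i _ => sub_ne_zero.2 (hAB i b).symm
  have hsign : (-1 : F) ^ (m + #B₀) = (-1) ^ #A₀ * (-1) ^ #A₀ᶜ * (-1) ^ #B₀ := by
    rw [← pow_add, ← pow_add, card_add_card_compl, Fintype.card_fin]
  rw [sylvCoeff, sylvCoeff, hcompl, prod_univ_erase_eq_prod_mul_prod_compl_insert hb,
    ← prod_mul_prod_compl A₀ fun i => B b - A i, hsign]
  simp only [prod_insert hb, prod_insert ht, prod_mul_distrib, prod_sub_eq_neg_one_pow_mul _ A,
    prod_sub_eq_neg_one_pow_mul B₀ B]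
  field_simp
  rw [← pow_mul, (even_two.mul_left _).neg_one_pow, mul_one]

-- Stated through `Sum.elim A B` so that the last factor is literally the summand of
-- `sum_X_sub_C_mul_C_eval_div_prod_erase_eq_zero` at the node `.inl a`.
theorem sylvTerm_insert_left (hA : Injective A) (hAB : ∀ i j, A i ≠ B j)
    {A₀ : Finset (Fin m)} (B₀ : Finset (Fin n)) {a : Fin m} (ha : a ∉ A₀) :
    sylvTerm A B (insert a A₀) B₀ =
      C ((-1) ^ #A₀ * sylvCoeff A B A₀ B₀) * (nodal A₀ A * nodal B₀ B) *
        ((X - C (Sum.elim A B (.inl a))) *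
          C (((nodal A₀ A * nodal B₀ B) ^ 2).eval (Sum.elim A B (.inl a)) /
            ∏ t ∈ univ.erase (.inl a), (Sum.elim A B (.inl a) - Sum.elim A B t))) := by
  rw [sylvTerm, nodal_insert_eq_nodal ha, sylvCoeff_insert_left hA hAB B₀ ha,
    prod_univ_erase_inl]
  simp only [Sum.elim_inl, Sum.elim_inr, eval_pow, eval_mul, eval_nodal, mul_div_assoc, map_mul]
  ring

theorem sylvTerm_insert_right (hB : Injective B) (hAB : ∀ i j, A i ≠ B j)
    (A₀ : Finset (Fin m)) {B₀ : Finset (Fin n)} {b : Fin n} (hb : b ∉ B₀) :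
    sylvTerm A B A₀ (insert b B₀) =
      C ((-1) ^ (m + #B₀) * sylvCoeff A B A₀ B₀) * (nodal A₀ A * nodal B₀ B) *
        ((X - C (Sum.elim A B (.inr b))) *
          C (((nodal A₀ A * nodal B₀ B) ^ 2).eval (Sum.elim A B (.inr b)) /
            ∏ t ∈ univ.erase (.inr b), (Sum.elim A B (.inr b) - Sum.elim A B t))) := by
  rw [sylvTerm, nodal_insert_eq_nodal hb, sylvCoeff_insert_right hB hAB A₀ hb,
    prod_univ_erase_inr]
  simp only [Sum.elim_inl, Sum.elim_inr, eval_pow, eval_mul, eval_nodal, mul_div_assoc, map_mul]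
  ring

theorem sum_sylvTerm_insert_right (hA : Injective A) (hB : Injective B)
    (hAB : ∀ i j, A i ≠ B j) (A₀ : Finset (Fin m)) (B₀ : Finset (Fin n))
    (hcard : 2 * (#A₀ + #B₀) + 3 ≤ m + n) :
    ∑ b ∈ B₀ᶜ, sylvTerm A B A₀ (insert b B₀) =
      C ((-1) ^ (#A₀ᶜ + #B₀ + 1)) * ∑ a ∈ A₀ᶜ, sylvTerm A B (insert a A₀) B₀ := by
  set v := Sum.elim A B
  set P := nodal A₀ A * nodal B₀ B
  set L : Fin m ⊕ Fin n → F[X] := fun t =>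
    (X - C (v t)) * C ((P ^ 2).eval (v t) / ∏ t' ∈ univ.erase t, (v t - v t'))
  have hP : (P ^ 2).natDegree = 2 * (#A₀ + #B₀) := by
    rw [(nodal_monic.mul nodal_monic).natDegree_pow, nodal_monic.natDegree_mul nodal_monic,
      natDegree_nodal, natDegree_nodal, mul_comm]
  have hL : ∑ a, L (.inl a) + ∑ b, L (.inr b) = 0 := by
    rw [← Fintype.sum_sum_type]
    refine sum_X_sub_C_mul_C_eval_div_prod_erase_eq_zero (hA.sumElim hB hAB).injOn ?_
    simp only [hP, card_univ, Fintype.card_sum, Fintype.card_fin, hcard]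
  have hLA : ∑ a ∈ A₀ᶜ, L (.inl a) = ∑ a, L (.inl a) :=
    sum_subset (subset_univ _) fun a _ ha => by
      simp [L, v, P, eval_nodal_at_node (by simpa using ha : a ∈ A₀)]
  have hLB : ∑ b ∈ B₀ᶜ, L (.inr b) = ∑ b, L (.inr b) :=
    sum_subset (subset_univ _) fun b _ hb => by
      simp [L, v, P, eval_nodal_at_node (by simpa using hb : b ∈ B₀)]
  have hsign : (-1 : F) ^ (m + #B₀) = -((-1) ^ (#A₀ᶜ + #B₀ + 1) * (-1) ^ #A₀) := by
    rw [show m + #B₀ = #A₀ᶜ + #A₀ + #B₀ by rw [card_compl_add_card, Fintype.card_fin]]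
    ring
  rw [sum_congr rfl fun b hb => sylvTerm_insert_right hB hAB A₀ (mem_compl.1 hb),
    sum_congr rfl fun a ha => sylvTerm_insert_left hA hAB B₀ (mem_compl.1 ha),
    ← mul_sum, ← mul_sum, hLA, hLB, eq_neg_of_add_eq_zero_right hL, hsign]
  simp only [map_mul, map_neg]
  ring

theorem succ_mul_sylv_succ (hA : Injective A) (hB : Injective B) (hAB : ∀ i j, A i ≠ B j)
    (p q : ℕ) (hcard : 2 * (p + q) + 3 ≤ m + n) :
    (q + 1 : F[X]) * sylv A B p (q + 1) =
      C ((-1) ^ (m - p + q + 1)) * ((p + 1 : F[X]) * sylv A B (p + 1) q) := by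
  have hexchange : ∀ A₀ ∈ powersetCard p univ, ∀ B₀ ∈ powersetCard q univ,
      ∑ b ∈ B₀ᶜ, sylvTerm A B A₀ (insert b B₀) =
        C ((-1) ^ (m - p + q + 1)) * ∑ a ∈ A₀ᶜ, sylvTerm A B (insert a A₀) B₀ := by
    intro A₀ hA₀ B₀ hB₀
    rw [mem_powersetCard_univ] at hA₀ hB₀
    rw [sum_sylvTerm_insert_right hA hB hAB A₀ B₀ (by omega), card_compl, Fintype.card_fin,
      hA₀, hB₀]
  simp only [← Nat.cast_succ, ← nsmul_eq_mul, sylv_eq_sum_sylvTerm]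
  calc (q + 1) • ∑ A₀ ∈ powersetCard p univ, ∑ B' ∈ powersetCard (q + 1) univ, sylvTerm A B A₀ B'
      = ∑ A₀ ∈ powersetCard p univ, ∑ B₀ ∈ powersetCard q univ,
          ∑ b ∈ B₀ᶜ, sylvTerm A B A₀ (insert b B₀) := by
        simp only [smul_sum, sum_powersetCard_sum_compl_insert]
    _ = C ((-1) ^ (m - p + q + 1)) * ∑ B₀ ∈ powersetCard q univ, ∑ A₀ ∈ powersetCard p univ,
          ∑ a ∈ A₀ᶜ, sylvTerm A B (insert a A₀) B₀ := by
        rw [sum_comm, mul_sum]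
        refine sum_congr rfl fun B₀ hB₀ => ?_
        rw [mul_sum]
        exact sum_congr rfl fun A₀ hA₀ => hexchange A₀ hA₀ B₀ hB₀
    _ = C ((-1) ^ (m - p + q + 1)) * ((p + 1) • ∑ A' ∈ powersetCard (p + 1) univ,
          ∑ B₀ ∈ powersetCard q univ, sylvTerm A B A' B₀) := by
        rw [sum_comm (s := powersetCard (p + 1) univ), smul_sum]
        exact congrArg _ (sum_congr rfl fun B₀ _ =>
          sum_powersetCard_sum_compl_insert p fun A' => sylvTerm A B A' B₀)

variable [CharZero F]

theorem choose_succ_mul_sylv (hA : Injective A) (hB : Injective B) (hAB : ∀ i j, A i ≠ B j)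
    {d p : ℕ} (hp : p < d) (hdm : d ≤ m) (hd : 2 * d + 1 ≤ m + n) :
    C (d.choose (p + 1) : F) * sylv A B p (d - p) =
      C ((-1 : F) ^ (m - d) * d.choose p) * sylv A B (p + 1) (d - (p + 1)) := by
  set q := d - (p + 1)
  have hdq : d - p = q + 1 := by omega
  have hstep := succ_mul_sylv_succ hA hB hAB p q (by omega)
  rw [show m - p + q + 1 = m - d + 2 * (d - p) by omega, pow_add, pow_mul, neg_one_sq, one_pow,
    mul_one] at hstep
  have hchoose : (d.choose (p + 1) : F[X]) * (p + 1) = d.choose p * (q + 1) := by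
    have h := Nat.choose_succ_right_eq d p
    rw [hdq] at h
    exact_mod_cast h
  apply mul_left_cancel₀ (Nat.cast_add_one_ne_zero p : (p + 1 : F[X]) ≠ 0)
  simp only [hdq, map_mul, map_natCast]
  linear_combination sylv A B p (q + 1) * hchoose + (d.choose p : F[X]) * hstep

theorem sylv_eq_neg_one_pow_mul_choose_mul_sylv (hA : Injective A) (hB : Injective B)
    (hAB : ∀ i j, A i ≠ B j) {d p : ℕ} (hp : p ≤ d) (hdm : d ≤ m) (hd : 2 * d + 1 ≤ m + n) :
    sylv A B p (d - p) = C ((-1 : F) ^ ((d - p) * (m - d)) * d.choose p) * sylv A B d 0 := by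
  induction hp using Nat.decreasingInduction with
  | self => simp
  | of_succ p hp ih =>
    have hchoose : (d.choose (p + 1) : F) ≠ 0 := Nat.cast_ne_zero.2 (Nat.choose_pos hp).ne'
    apply mul_left_cancel₀ (C_ne_zero.2 hchoose)
    rw [choose_succ_mul_sylv hA hB hAB hp hdm hd, ih,
      show d - p = d - (p + 1) + 1 by omega, add_one_mul, pow_add]
    simp only [map_mul]
    ring

end SylvesterDoubleSum

/-- for admissible d and 0 ≤ p, p' ≤ d (with q = d−p, q' = d−p'),
(−1)^{p(m−d)} Sylv^{p,q}/C(d,p) = (−1)^{p'(m−d)} Sylv^{p',q'}/C(d,p');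
in particular C(d,p)·Sylv^{d,0} = (−1)^{(d−p)(m−d)}·Sylv^{p,d−p}. -/
theorem stmt14 {F : Type*} [Field F] [CharZero F] (m n d p p' : ℕ)
    (A : Fin m → F) (B : Fin n → F)
    (hA : Function.Injective A) (hB : Function.Injective B)
    (hAB : ∀ i j, A i ≠ B j)
    (hp : p ≤ d) (hp' : p' ≤ d)
    (hd : d < min m n ∨ (m ≠ n ∧ d = min m n)) :
    C ((-1 : F) ^ (p * (m - d)) / (d.choose p : F)) * sylv A B p (d - p) =
        C ((-1 : F) ^ (p' * (m - d)) / (d.choose p' : F)) * sylv A B p' (d - p') ∧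
      C ((d.choose p : F)) * sylv A B d 0 =
        C ((-1 : F) ^ ((d - p) * (m - d))) * sylv A B p (d - p) := by
  have hdm : d ≤ m := by omega
  have hdmn : 2 * d + 1 ≤ m + n := by omega
  have hclosed {k : ℕ} (hk : k ≤ d) :=
    sylv_eq_neg_one_pow_mul_choose_mul_sylv hA hB hAB hk hdm hdmn
  have hnormalized {k : ℕ} (hk : k ≤ d) :
      C ((-1 : F) ^ (k * (m - d)) / (d.choose k : F)) * sylv A B k (d - k) =
        C ((-1 : F) ^ (d * (m - d))) * sylv A B d 0 := by
    have hchoose : (d.choose k : F) ≠ 0 := Nat.cast_ne_zero.2 (Nat.choose_pos hk).ne'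
    rw [hclosed hk, ← mul_assoc, ← map_mul]
    congr 2
    field_simp
    rw [← pow_add, ← add_mul, Nat.add_sub_cancel' hk]
  refine ⟨(hnormalized hp).trans (hnormalized hp').symm, ?_⟩
  rw [hclosed hp, ← mul_assoc, ← map_mul, ← mul_assoc, ← mul_pow, neg_one_mul, neg_neg, one_pow,
    one_mul]
end

section
/- Sylvester's double sum Sylv^{p,q}(A,B;x), a priori a rational function in the indeterminates of A and B, is in fact a polynomial in Z[A,B][x] of degree at most d = p+q in x (assuming d < min{m,n}, or d = min{m,n} with m ≠ n). -/
open Polynomial Matrix Finset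

/-!
Multiplying Sylv by the Vandermonde determinants `V_A V_B` clears all denominators, since
`R(A', A∖A')` divides `V_A` up to sign. Sylv is invariant under permutations of `A` and of `B`,
while `V_A` and `V_B` change sign under transpositions, so every coefficient of `V_A V_B · Sylv`
is alternating in `A` and in `B`. An alternating polynomial vanishes on `X_i = X_j`, so it is
divisible by each of the pairwise non-associate primes `X_j - X_i`, hence by the Vandermonde
product; dividing out `V_A` and then `V_B` leaves a coefficient in `ℤ[A,B]`. The degree bound
holds termwise.
-/

theorem Finset.prod_primes_dvd_of_injOn {ι M : Type*} [CommMonoidWithZero M] [IsCancelMulZero M]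
    {s : Finset ι} {p : ι → M} {n : M} (hp : ∀ i ∈ s, Prime (p i))
    (hinj : Set.InjOn (fun i => Associates.mk (p i)) s) (hdvd : ∀ i ∈ s, p i ∣ n) :
    ∏ i ∈ s, p i ∣ n := by
  classical
  have := Finset.prod_primes_dvd (s := s.image fun i => Associates.mk (p i)) (Associates.mk n)
    (by simpa [Associates.prime_mk] using hp) (by simpa [Associates.mk_dvd_mk] using hdvd)
  rwa [prod_image hinj, Associates.finsetProd_mk, Associates.mk_dvd_mk] at this

theorem Finset.compl_map_equiv {α : Type*} [Fintype α] [DecidableEq α] (τ : Equiv.Perm α)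
    (s : Finset α) : (s.map τ.toEmbedding)ᶜ = sᶜ.map τ.toEmbedding := by
  ext
  simp

theorem Finset.sum_powersetCard_univ_map_equiv {α M : Type*} [Fintype α] [AddCommMonoid M]
    (τ : Equiv.Perm α) (k : ℕ) (f : Finset α → M) :
    ∑ s ∈ powersetCard k univ, f (s.map τ.toEmbedding) = ∑ s ∈ powersetCard k univ, f s := by
  conv_rhs => rw [← map_univ_equiv τ, powersetCard_map, sum_map]
  rfl

section Vandermonde

variable {R : Type*} [CommRing R] {k : ℕ}

theorem Matrix.det_vandermonde_eq_prod_lt (x : Fin k → R) :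
    (vandermonde x).det = ∏ p ∈ {p : Fin k × Fin k | p.1 < p.2}, (x p.2 - x p.1) := by
  rw [det_vandermonde, prod_finset_product _ univ (fun i => Ioi i) (by simp)]

theorem Matrix.det_vandermonde_comp_perm (x : Fin k → R) (τ : Equiv.Perm (Fin k)) :
    (vandermonde (x ∘ τ)).det = Equiv.Perm.sign τ * (vandermonde x).det :=
  det_permute τ (vandermonde x)

theorem Matrix.prod_prod_compl_sub_dvd_det_vandermonde (x : Fin k → R) (s : Finset (Fin k)) :
    ∏ i ∈ s, ∏ j ∈ sᶜ, (x i - x j) ∣ (vandermonde x).det := by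
  let sort : Fin k × Fin k → Fin k × Fin k := fun p => (min p.1 p.2, max p.1 p.2)
  have hinj : Set.InjOn sort (s ×ˢ sᶜ : Finset _) := by
    rintro ⟨a, b⟩ hab ⟨a', b'⟩ hab' h
    simp only [coe_product, Set.mem_prod, mem_coe, mem_compl] at hab hab'
    simp only [sort, Prod.mk.injEq] at h
    rcases le_total a b with h1 | h1 <;> rcases le_total a' b' with h2 | h2 <;>
      simp_all
  have hsub : (s ×ˢ sᶜ).image sort ⊆ ({p : Fin k × Fin k | p.1 < p.2} : Finset _) := by
    simp only [subset_iff, mem_image, mem_product, mem_compl, mem_filter, mem_univ, true_and]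
    rintro _ ⟨⟨a, b⟩, ⟨ha, hb⟩, rfl⟩
    exact min_lt_max.2 (ne_of_mem_of_not_mem ha hb)
  have hassoc : Associated (∏ p ∈ s ×ˢ sᶜ, (x p.1 - x p.2))
      (∏ p ∈ s ×ˢ sᶜ, (x (sort p).2 - x (sort p).1)) := by
    refine Associated.prod _ _ _ fun p _ => ?_
    rcases le_total p.1 p.2 with h | h
    · simp only [sort, min_eq_left h, max_eq_right h, ← neg_sub (x p.1)]
      exact (Associated.refl _).neg_right
    · simp only [sort, min_eq_right h, max_eq_left h]
      rfl
  rw [← prod_product', det_vandermonde_eq_prod_lt]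
  refine hassoc.dvd.trans ?_
  rw [← prod_image (f := fun p => x p.2 - x p.1) hinj]
  exact prod_dvd_prod_of_subset _ _ _ hsub

end Vandermonde

namespace MvPolynomial

variable {R σ : Type*} [CommRing R]

noncomputable def renameFrac (g : σ ≃ σ) :
    FractionRing (MvPolynomial σ R) ≃+* FractionRing (MvPolynomial σ R) :=
  IsFractionRing.ringEquivOfRingEquiv (renameEquiv R g).toRingEquiv

theorem renameFrac_algebraMap (g : σ ≃ σ) (f : MvPolynomial σ R) :
    renameFrac g (algebraMap _ _ f) =
      algebraMap _ (FractionRing (MvPolynomial σ R)) (rename g f) :=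
  IsFractionRing.ringEquivOfRingEquiv_algebraMap _ f

theorem rename_det_vandermonde_X {τ : Type*} (g : σ → τ) {k : ℕ} (x : Fin k → σ) :
    rename g (vandermonde fun i => (X (x i) : MvPolynomial σ R)).det =
      (vandermonde fun i => X (g (x i))).det := by
  rw [AlgHom.map_det]
  congr 1
  ext i j
  simp [vandermonde_apply]

variable [DecidableEq σ]

theorem X_sub_X_dvd_sub_aeval_update (u v : σ) (f : MvPolynomial σ R) :
    X v - X u ∣ f - aeval (Function.update X v (X u)) f := by
  rw [← Ideal.mem_span_singleton, ← Ideal.Quotient.eq]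
  have : (Ideal.Quotient.mkₐ R (Ideal.span {X v - X u})).comp
      (aeval (Function.update X v (X u))) = Ideal.Quotient.mkₐ R _ := by
    ext w
    rcases eq_or_ne w v with rfl | h
    · simpa [Ideal.Quotient.eq, Ideal.mem_span_singleton] using dvd_sub_comm.2 dvd_rfl
    · simp [h]
  exact (DFunLike.congr_fun this f).symm

theorem ker_aeval_update_X (u v : σ) :
    RingHom.ker (aeval (Function.update X v (X u)) : MvPolynomial σ R →ₐ[R] MvPolynomial σ R) =
      Ideal.span {X v - X u} := by
  ext f
  rw [RingHom.mem_ker, Ideal.mem_span_singleton]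
  constructor
  · intro h
    simpa only [h, sub_zero] using X_sub_X_dvd_sub_aeval_update (R := R) u v f
  · rintro ⟨g, rfl⟩
    simp [Function.update_apply]

theorem rename_swap_det_vandermonde_X {k : ℕ} {e : Fin k → σ} (he : e.Injective) {i j : Fin k}
    (hij : i ≠ j) :
    rename (Equiv.swap (e i) (e j)) (vandermonde fun l => (X (e l) : MvPolynomial σ R)).det =
      -(vandermonde fun l => (X (e l) : MvPolynomial σ R)).det := by
  rw [rename_det_vandermonde_X]
  simp only [he.swap_apply]
  exact (det_vandermonde_comp_perm (fun l => X (e l)) (Equiv.swap i j)).trans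
    (by simp [Equiv.Perm.sign_swap hij])

variable [IsDomain R]

theorem prime_X_sub_X {u v : σ} (h : u ≠ v) : Prime (X v - X u : MvPolynomial σ R) := by
  rw [← Ideal.span_singleton_prime (sub_ne_zero.2 (X_injective.ne h.symm)), ← ker_aeval_update_X]
  exact RingHom.ker_isPrime _

theorem eq_and_eq_or_eq_and_eq_of_associated_X_sub_X {a b c d : σ} (hcd : c ≠ d)
    (h : Associated (X b - X a : MvPolynomial σ R) (X d - X c)) :
    (a = c ∧ b = d) ∨ (a = d ∧ b = c) := by
  have := (ker_aeval_update_X (R := R) a b).ge (Ideal.mem_span_singleton.2 h.dvd)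
  rw [RingHom.mem_ker] at this
  simp only [map_sub, aeval_X, Function.update_apply, sub_eq_zero] at this
  split_ifs at this with hd hc hc <;> have := X_injective this <;> grind

variable [CharZero R]

theorem X_sub_X_dvd_of_rename_swap_eq_neg {u v : σ} {f : MvPolynomial σ R}
    (hf : rename (Equiv.swap u v) f = -f) : X v - X u ∣ f := by
  have hg : (aeval (Function.update X v (X u))).comp (rename (Equiv.swap u v)) =
      (aeval (Function.update X v (X u)) : MvPolynomial σ R →ₐ[R] MvPolynomial σ R) := by
    ext w
    simp only [AlgHom.comp_apply, rename_X, aeval_X, Function.update_apply,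
      Equiv.swap_apply_def]
    split_ifs <;> simp_all
  have hgf : aeval (Function.update X v (X u : MvPolynomial σ R)) f = 0 := by
    have := DFunLike.congr_fun hg f
    rw [AlgHom.comp_apply, hf, map_neg] at this
    exact CharZero.eq_neg_self_iff.1 this.symm
  simpa only [hgf, sub_zero] using X_sub_X_dvd_sub_aeval_update u v f

theorem det_vandermonde_X_dvd_of_rename_swap_eq_neg {k : ℕ} {e : Fin k → σ}
    (he : e.Injective) {f : MvPolynomial σ R}
    (hf : ∀ i j, i < j → rename (Equiv.swap (e i) (e j)) f = -f) :
    (vandermonde fun i => (X (e i) : MvPolynomial σ R)).det ∣ f := by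
  rw [det_vandermonde_eq_prod_lt]
  refine prod_primes_dvd_of_injOn (fun p hp => prime_X_sub_X (he.ne (mem_filter.1 hp).2.ne))
    ?_ fun p hp => X_sub_X_dvd_of_rename_swap_eq_neg (hf _ _ (mem_filter.1 hp).2)
  rintro ⟨i, j⟩ hij ⟨i', j'⟩ hij' h
  simp only [coe_filter, mem_univ, true_and, Set.mem_ofPred_eq] at hij hij'
  rcases eq_and_eq_or_eq_and_eq_of_associated_X_sub_X (he.ne hij'.ne)
    (Associates.mk_eq_mk_iff_associated.1 h) with ⟨h1, h2⟩ | ⟨h1, h2⟩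
  · rw [he h1.symm, he h2.symm]
  · exact absurd (he h2 ▸ he h1 ▸ hij) hij'.not_gt

local notation "φ" => algebraMap (MvPolynomial σ R) (FractionRing (MvPolynomial σ R))

theorem exists_algebraMap_eq_mul_of_det_vandermonde_mul {k : ℕ} {e : Fin k → σ}
    (he : e.Injective) {N W : MvPolynomial σ R} {c : FractionRing (MvPolynomial σ R)}
    (hN : φ N = φ ((vandermonde fun i => (X (e i) : MvPolynomial σ R)).det * W) * c)
    (hW : ∀ i j, i < j → rename (Equiv.swap (e i) (e j)) W = W)
    (hc : ∀ i j, i < j → renameFrac (Equiv.swap (e i) (e j)) c = c) :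
    ∃ M, φ M = φ W * c := by
  set V := (vandermonde fun i => (X (e i) : MvPolynomial σ R)).det
  have hinj := IsFractionRing.injective (MvPolynomial σ R) (FractionRing (MvPolynomial σ R))
  have hanti : ∀ i j, i < j → rename (Equiv.swap (e i) (e j)) N = -N := by
    intro i j hij
    apply hinj
    rw [← renameFrac_algebraMap, hN, map_mul, renameFrac_algebraMap, hc i j hij, map_mul,
      rename_swap_det_vandermonde_X he hij.ne, hW i j hij, neg_mul, map_neg, neg_mul, map_neg, hN]
  obtain ⟨M, rfl⟩ := det_vandermonde_X_dvd_of_rename_swap_eq_neg he hanti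
  have hV : φ V ≠ 0 :=
    (map_ne_zero_iff _ hinj).2 (det_vandermonde_ne_zero_iff.2 (X_injective.comp he))
  refine ⟨M, mul_left_cancel₀ hV ?_⟩
  rw [← map_mul, hN, map_mul, mul_assoc]

end MvPolynomial

section Sylvester

variable {F : Type*} [Field F] {m n : ℕ}

theorem sylv_degree_le (A : Fin m → F) (B : Fin n → F) (p q : ℕ) :
    (sylv A B p q).degree ≤ (p + q : ℕ) := by
  unfold sylv
  refine (degree_sum_le _ _).trans (Finset.sup_le fun A' hA' => ?_)
  refine (degree_sum_le _ _).trans (Finset.sup_le fun B' hB' => ?_)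
  rw [mem_powersetCard] at hA' hB'
  refine (degree_mul_le _ _).trans ((add_le_add (degree_mul_le _ _) degree_C_le).trans ?_)
  simp [degree_prod, hA'.2, hB'.2]

theorem sylv_map {F' : Type*} [Field F'] (ψ : F →+* F') (A : Fin m → F) (B : Fin n → F)
    (p q : ℕ) : (sylv A B p q).map ψ = sylv (fun i => ψ (A i)) (fun j => ψ (B j)) p q := by
  simp only [sylv, Polynomial.map_sum, Polynomial.map_mul, Polynomial.map_prod,
    Polynomial.map_sub, Polynomial.map_X, Polynomial.map_C, map_div₀, map_mul, map_prod, map_sub]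

theorem sylv_comp_perm (A : Fin m → F) (B : Fin n → F) (p q : ℕ) (τA : Equiv.Perm (Fin m))
    (τB : Equiv.Perm (Fin n)) : sylv (A ∘ τA) (B ∘ τB) p q = sylv A B p q := by
  unfold sylv
  conv_rhs => rw [← sum_powersetCard_univ_map_equiv τA]
  refine sum_congr rfl fun A' _ => ?_
  conv_rhs => rw [← sum_powersetCard_univ_map_equiv τB]
  refine sum_congr rfl fun B' _ => ?_
  simp only [compl_map_equiv, prod_map, Equiv.coe_toEmbedding, Function.comp_apply]

theorem mul_div_mem_range_of_dvd {R : Type*} [CommRing R] (φ : R →+* F) {d v : R} (h : d ∣ v)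
    (x : R) : φ v * (φ x / φ d) ∈ Set.range φ := by
  obtain ⟨e, rfl⟩ := h
  by_cases hd : φ d = 0
  · exact ⟨0, by simp [hd]⟩
  · exact ⟨e * x, by rw [map_mul, map_mul]; field_simp⟩

theorem C_det_vandermonde_mul_sylv_mem_lifts {R : Type*} [CommRing R] (φ : R →+* F)
    (a : Fin m → R) (b : Fin n → R) (p q : ℕ) :
    C (φ ((vandermonde a).det * (vandermonde b).det)) *
      sylv (fun i => φ (a i)) (fun j => φ (b j)) p q ∈ lifts φ := by
  have hlin : ∀ r : R, X - C (φ r) ∈ lifts φ := fun r => ⟨X - C r, by simp⟩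
  unfold sylv
  simp only [mul_sum]
  refine sum_mem fun A' _ => sum_mem fun B' _ => ?_
  simp only [← map_sub, ← map_prod, ← map_mul]
  rw [mul_left_comm, ← C_mul]
  refine mul_mem (mul_mem (prod_mem fun i _ => hlin _) (prod_mem fun j _ => hlin _)) ?_
  obtain ⟨r, hr⟩ := mul_div_mem_range_of_dvd φ
    (mul_dvd_mul (prod_prod_compl_sub_dvd_det_vandermonde a A')
      (prod_prod_compl_sub_dvd_det_vandermonde b B')) _
  rw [← hr]
  exact C_mem_lifts φ r

end Sylvester

section Indeterminates

open MvPolynomial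

variable {R : Type*} [CommRing R] [IsDomain R] {m n : ℕ}

local notation "φ" => algebraMap (MvPolynomial (Fin m ⊕ Fin n) R)
  (FractionRing (MvPolynomial (Fin m ⊕ Fin n) R))

theorem sylv_X_map_renameFrac_sumCongr (p q : ℕ) (τA : Equiv.Perm (Fin m))
    (τB : Equiv.Perm (Fin n)) :
    (sylv (fun i => φ (X (Sum.inl i))) (fun j => φ (X (Sum.inr j))) p q).map
        (renameFrac (Equiv.sumCongr τA τB)).toRingHom =
      sylv (fun i => φ (X (Sum.inl i))) (fun j => φ (X (Sum.inr j))) p q := by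
  rw [sylv_map]
  simp only [RingEquiv.toRingHom_eq_coe, RingHom.coe_coe, renameFrac_algebraMap, rename_X,
    Equiv.sumCongr_apply, Sum.map_inl, Sum.map_inr]
  exact sylv_comp_perm (fun i => φ (X (Sum.inl i))) (fun j => φ (X (Sum.inr j))) p q τA τB

theorem sylv_X_mem_lifts [CharZero R] (p q : ℕ) :
    sylv (fun i => φ (X (Sum.inl i))) (fun j => φ (X (Sum.inr j))) p q ∈ lifts φ := by
  set S := sylv (fun i => φ (X (Sum.inl i))) (fun j => φ (X (Sum.inr j))) p q
  rw [lifts_iff_coeff_lifts]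
  intro k
  have hS : ∀ τA τB, renameFrac (Equiv.sumCongr τA τB) (S.coeff k) = S.coeff k :=
    fun τA τB => by
      simpa using congrArg (Polynomial.coeff · k) (sylv_X_map_renameFrac_sumCongr p q τA τB)
  obtain ⟨N, hN⟩ := (lifts_iff_coeff_lifts _).1
    (C_det_vandermonde_mul_sylv_mem_lifts φ (fun i => X (Sum.inl i)) (fun j => X (Sum.inr j))
      p q) k
  rw [Polynomial.coeff_C_mul] at hN
  obtain ⟨M, hM⟩ := exists_algebraMap_eq_mul_of_det_vandermonde_mul Sum.inl_injective hN
    (fun i j _ => by simp [rename_det_vandermonde_X, Equiv.swap_apply_of_ne_of_ne])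
    (fun i j _ => by simpa using hS (Equiv.swap i j) 1)
  obtain ⟨c, hc⟩ := exists_algebraMap_eq_mul_of_det_vandermonde_mul (N := M) (W := 1)
    (c := S.coeff k) Sum.inr_injective (by rw [mul_one, hM])
    (fun i j _ => map_one _)
    (fun i j _ => by simpa using hS 1 (Equiv.swap i j))
  exact ⟨c, by rwa [map_one, one_mul] at hc⟩

end Indeterminates

theorem stmt17_general (m n p q : ℕ) :
    ∃ P : Polynomial (MvPolynomial (Fin m ⊕ Fin n) ℤ),
      P.map (algebraMap (MvPolynomial (Fin m ⊕ Fin n) ℤ)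
          (FractionRing (MvPolynomial (Fin m ⊕ Fin n) ℤ))) =
        sylv (fun i => algebraMap (MvPolynomial (Fin m ⊕ Fin n) ℤ)
              (FractionRing (MvPolynomial (Fin m ⊕ Fin n) ℤ)) (MvPolynomial.X (Sum.inl i)))
          (fun j => algebraMap (MvPolynomial (Fin m ⊕ Fin n) ℤ)
              (FractionRing (MvPolynomial (Fin m ⊕ Fin n) ℤ)) (MvPolynomial.X (Sum.inr j)))
          p q ∧
      P.degree ≤ (p + q : ℕ) := by
  obtain ⟨P, hP, hdeg⟩ :=
    exists_degree_eq_of_mem_lifts (sylv_X_mem_lifts (R := ℤ) (m := m) (n := n) p q)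
  exact ⟨P, hP, hdeg ▸ sylv_degree_le _ _ p q⟩

/-- Sylvester's double sum Sylv^{p,q}(A,B;x), a priori a rational function
in the indeterminates A, B, is in fact a polynomial in ℤ[A,B][x] of degree at most
d = p+q in x.  Here A and B are lists of distinct indeterminates, realized as the
variables of ℤ[A,B] = MvPolynomial (Fin m ⊕ Fin n) ℤ inside its fraction field. -/
theorem stmt17 (m n p q : ℕ)
    (hd : p + q < min m n ∨ (m ≠ n ∧ p + q = min m n)) :
    ∃ P : Polynomial (MvPolynomial (Fin m ⊕ Fin n) ℤ),
      P.map (algebraMap (MvPolynomial (Fin m ⊕ Fin n) ℤ)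
          (FractionRing (MvPolynomial (Fin m ⊕ Fin n) ℤ))) =
        sylv (fun i => algebraMap (MvPolynomial (Fin m ⊕ Fin n) ℤ)
              (FractionRing (MvPolynomial (Fin m ⊕ Fin n) ℤ)) (MvPolynomial.X (Sum.inl i)))
          (fun j => algebraMap (MvPolynomial (Fin m ⊕ Fin n) ℤ)
              (FractionRing (MvPolynomial (Fin m ⊕ Fin n) ℤ)) (MvPolynomial.X (Sum.inr j)))
          p q ∧
      P.degree ≤ (p + q : ℕ) :=
  stmt17_general m n p q
end
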